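/- arXiv:2405.08301 — 8 statements merged into one kernel-verified Lean document; each statement's English description precedes it below -/
import Mathlib

section
/- Let p be an exchangeable probability distribution on 𝒳^k whose one-shot encoding T has the mixture-geometric distribution Pr(T=t) = ∑_{x} p(x)(1-q(x))^{t-1} q(x) for a probability distribution q on 𝒳^k with q(x) > 0 whenever p(x) > 0. Then E[log₂ T] ≤ H(p) + D(p‖q), where H(p) = -∑_x p(x) log₂ p(x) and D(p‖q) = ∑_x p(x) log₂(p(x)/q(x)). -/
/-!
A mixture of geometric laws is handled component by component. If `T` is geometric with
success probability `a`, then `E[T] = 1 / a`, and the concavity of `log` (in the form of its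
tangent line at `1 / a`) gives `E[log T] ≤ log E[T] = -log a`. Averaging over `x ∼ p` with
`a = q x` bounds `E[log₂ T]` by the cross entropy `-∑ p log₂ q = H(p) + D(p‖q)`.
-/

open Real Finset

theorem hasSum_natCast_add_one_mul_geometric {𝕜 : Type*} [NormedDivisionRing 𝕜]
    [HasSummableGeomSeries 𝕜] {r : 𝕜} (hr : ‖r‖ < 1) :
    HasSum (fun n : ℕ => ((n : 𝕜) + 1) * r ^ n) (1 / (1 - r) ^ 2) := by
  simpa using hasSum_choose_mul_geometric_of_norm_lt_one 1 hr

theorem Real.log_le_mul_sub_one_sub_log {a x : ℝ} (ha : 0 < a) (hx : 0 < x) :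
    log x ≤ a * x - 1 - log a := by
  have := log_le_sub_one_of_pos (mul_pos ha hx)
  rw [log_mul ha.ne' hx.ne'] at this
  linarith

section GeometricLog

variable {a : ℝ}

theorem hasSum_geometric_mul_tangent_log (h0 : 0 < a) (h1 : a ≤ 1) :
    HasSum (fun n : ℕ => (1 - a) ^ n * a * (a * (n + 1) - 1 - log a)) (-log a) := by
  have hr : ‖1 - a‖ < 1 := by rw [norm_of_nonneg (by linarith)]; linarith
  have hmean := (hasSum_natCast_add_one_mul_geometric hr).mul_left (a ^ 2)
  have hmass := (hasSum_geometric_of_norm_lt_one hr).mul_left (a * (-1 - log a))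
  rw [sub_sub_cancel] at hmean hmass
  have hsum : a ^ 2 * (1 / a ^ 2) + a * (-1 - log a) * a⁻¹ = -log a := by field_simp; ring
  exact hsum ▸ (hmean.add hmass).congr_fun fun n => by ring

theorem geometric_mul_log_succ_le_tangent (h0 : 0 < a) (h1 : a ≤ 1) (n : ℕ) :
    (1 - a) ^ n * a * log (n + 1) ≤ (1 - a) ^ n * a * (a * (n + 1) - 1 - log a) := by
  gcongr
  exact log_le_mul_sub_one_sub_log h0 (by positivity)

theorem summable_geometric_mul_log_succ (h0 : 0 < a) (h1 : a ≤ 1) :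
    Summable fun n : ℕ => (1 - a) ^ n * a * log (n + 1) := by
  refine (hasSum_geometric_mul_tangent_log h0 h1).summable.of_nonneg_of_le
    (fun n => ?_) fun n => ?_
  · have := sub_nonneg.2 h1
    have := log_nonneg (le_add_of_nonneg_left n.cast_nonneg : (1 : ℝ) ≤ n + 1)
    positivity
  · exact geometric_mul_log_succ_le_tangent h0 h1 n

theorem tsum_geometric_mul_log_succ_le (h0 : 0 < a) (h1 : a ≤ 1) :
    ∑' n : ℕ, (1 - a) ^ n * a * log (n + 1) ≤ -log a :=
  hasSum_le (geometric_mul_log_succ_le_tangent h0 h1)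
    (summable_geometric_mul_log_succ h0 h1).hasSum (hasSum_geometric_mul_tangent_log h0 h1)

theorem summable_geometric_mul_logb_succ (b : ℝ) (h0 : 0 ≤ a) (h1 : a ≤ 1) :
    Summable fun n : ℕ => (1 - a) ^ n * a * logb b (n + 1) := by
  rcases h0.eq_or_lt with rfl | h0
  · simp
  · simpa only [logb, mul_div_assoc] using (summable_geometric_mul_log_succ h0 h1).div_const _

-- For `a = 0` both sides vanish, the right one because `log 0 = 0`.
theorem tsum_geometric_mul_logb_succ_le {b : ℝ} (hb : 1 ≤ b) (h0 : 0 ≤ a) (h1 : a ≤ 1) :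
    ∑' n : ℕ, (1 - a) ^ n * a * logb b (n + 1) ≤ -logb b a := by
  rcases h0.eq_or_lt with rfl | h0
  · simp
  · simp only [logb, ← mul_div_assoc, tsum_div_const, ← neg_div]
    exact div_le_div_of_nonneg_right (tsum_geometric_mul_log_succ_le h0 h1) (log_nonneg hb)

end GeometricLog

theorem neg_mul_logb_add_mul_logb_div {b p q : ℝ} (hpq : p ≠ 0 → q ≠ 0) :
    -(p * logb b p) + p * logb b (p / q) = p * -logb b q := by
  rcases eq_or_ne p 0 with rfl | hp
  · simp
  · rw [logb_div hp (hpq hp)]; ring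

theorem stmt3_general {𝒳 : Type*} [Fintype 𝒳] (k : ℕ)
    (p q : (Fin k → 𝒳) → ℝ)
    (hp0 : ∀ x, 0 ≤ p x)
    (hq0 : ∀ x, 0 ≤ q x) (hq1 : ∑ x, q x = 1)
    (hpos : ∀ x, 0 < p x → 0 < q x) :
    ∑' j : ℕ, (∑ x, p x * (1 - q x) ^ j * q x) * Real.logb 2 (j + 1) ≤
      (-∑ x, p x * Real.logb 2 (p x)) + ∑ x, p x * Real.logb 2 (p x / q x) := by
  have hq_le : ∀ x, q x ≤ 1 := fun x => hq1 ▸ single_le_sum (fun y _ => hq0 y) (mem_univ x)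
  calc ∑' j : ℕ, (∑ x, p x * (1 - q x) ^ j * q x) * logb 2 (j + 1)
      = ∑ x, p x * ∑' j : ℕ, (1 - q x) ^ j * q x * logb 2 (j + 1) := by
        simp_rw [← tsum_mul_left]
        rw [← Summable.tsum_finsetSum fun x _ =>
          (summable_geometric_mul_logb_succ 2 (hq0 x) (hq_le x)).mul_left (p x)]
        exact tsum_congr fun j => by rw [sum_mul]; exact sum_congr rfl fun x _ => by ring
    _ ≤ ∑ x, p x * -logb 2 (q x) := by
        gcongr with x
        · exact hp0 x
        · exact tsum_geometric_mul_logb_succ_le one_le_two (hq0 x) (hq_le x)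
    _ = (-∑ x, p x * logb 2 (p x)) + ∑ x, p x * logb 2 (p x / q x) := by
        rw [← sum_neg_distrib, ← sum_add_distrib]
        refine sum_congr rfl fun x _ => (neg_mul_logb_add_mul_logb_div fun hp => ?_).symm
        exact (hpos x ((hp0 x).lt_of_ne' hp)).ne'

/-- Let `p` be an exchangeable probability distribution on `𝒳^k` whose one-shot
encoding `T` has the mixture-geometric distribution
`Pr(T = t) = ∑_x p(x)(1-q(x))^{t-1} q(x)` for a probability distribution `q` on `𝒳^k`
with `q(x) > 0` whenever `p(x) > 0`. Then `E[log₂ T] ≤ H(p) + D(p‖q)`.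
Positive integers `t ≥ 1` are parameterized as `t = j + 1`. -/
theorem stmt3 {𝒳 : Type*} [Fintype 𝒳] (k : ℕ) (hk : 0 < k)
    (p q : (Fin k → 𝒳) → ℝ)
    (hp0 : ∀ x, 0 ≤ p x) (hp1 : ∑ x, p x = 1)
    (hq0 : ∀ x, 0 ≤ q x) (hq1 : ∑ x, q x = 1)
    (hexch : ∀ (σ : Equiv.Perm (Fin k)) (x : Fin k → 𝒳), p (x ∘ σ) = p x)
    (hpos : ∀ x, 0 < p x → 0 < q x) :
    ∑' j : ℕ, (∑ x, p x * (1 - q x) ^ j * q x) * Real.logb 2 (j + 1) ≤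
      (-∑ x, p x * Real.logb 2 (p x)) + ∑ x, p x * Real.logb 2 (p x / q x) :=
  stmt3_general k p q hp0 hq0 hq1 hpos
end

section
/- Let g(·;θ) denote the geometric distribution g(t;θ) = (1-θ)^{t-1}θ on the positive integers. If 2^{-ℓ} ≤ θ ≤ 2^{-ℓ+1} for a positive integer ℓ, then the Kullback–Leibler divergence D(g(·;θ) ‖ g(·;2^{-ℓ})) is at most 1 bit. -/
/-- Let `g(t;θ) = (1-θ)^{t-1}θ` be the geometric distribution on positive integers.
If `2^{-ℓ} ≤ θ ≤ 2^{-ℓ+1}` for a positive integer `ℓ`, then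
`D(g(·;θ) ‖ g(·;2^{-ℓ})) ≤ 1` bit. Positive integers `t ≥ 1` appear as `t = j + 1`. -/
theorem stmt4 (θ : ℝ) (ℓ : ℕ) (hℓ : 1 ≤ ℓ) (hθ0 : 0 < θ) (hθ1 : θ ≤ 1)
    (hlow : (2 : ℝ) ^ (-(ℓ : ℝ)) ≤ θ) (hhigh : θ ≤ (2 : ℝ) ^ (-(ℓ : ℝ) + 1)) :
    ∑' j : ℕ, (1 - θ) ^ j * θ *
        Real.logb 2 (((1 - θ) ^ j * θ) /
          ((1 - (2 : ℝ) ^ (-(ℓ : ℝ))) ^ j * (2 : ℝ) ^ (-(ℓ : ℝ)))) ≤ 1 := by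
  set p : ℝ := (2 : ℝ) ^ (-(ℓ : ℝ)) with hpdef
  have hp0 : 0 < p := Real.rpow_pos_of_pos two_pos _
  have hp1 : p ≤ 1/2 := by
    have h : (2:ℝ) ^ (-(ℓ:ℝ)) ≤ (2:ℝ) ^ (-(1:ℝ)) := by
      apply Real.rpow_le_rpow_of_exponent_le one_le_two
      have : (1:ℝ) ≤ (ℓ:ℝ) := by exact_mod_cast hℓ
      linarith
    have h2 : (2:ℝ) ^ (-(1:ℝ)) = 1/2 := by
      rw [Real.rpow_neg_one]; norm_num
    rw [hpdef]; rw [h2] at h; exact h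
  have h2p : θ ≤ 2 * p := by
    have : (2:ℝ) ^ (-(ℓ:ℝ) + 1) = p * 2 := by
      rw [Real.rpow_add two_pos, Real.rpow_one]
    linarith [hhigh.trans_eq this]
  rcases eq_or_lt_of_le hθ1 with h1 | hθlt
  · -- θ = 1
    have hθ : θ = 1 := h1
    have hpeq : p = 1/2 := le_antisymm hp1 (by linarith)
    rw [tsum_eq_single 0]
    · simp [hθ, hpeq]
    · intro j hj
      have : (1 - θ) ^ j = 0 := by
        rw [hθ]; simp [zero_pow hj]
      rw [this]; ring
  · -- θ < 1
    set r : ℝ := 1 - θ with hrdef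
    have hr0 : 0 < r := by simp [hrdef]; linarith
    have hr1 : r < 1 := by simp [hrdef]; linarith
    have h1p : 0 < 1 - p := by linarith [hp1]
    set A : ℝ := Real.logb 2 (r / (1 - p)) with hAdef
    set B : ℝ := Real.logb 2 (θ / p) with hBdef
    have key : ∀ j : ℕ, (1 - θ) ^ j * θ *
        Real.logb 2 (((1 - θ) ^ j * θ) / ((1 - p) ^ j * p))
        = (θ * A) * ((j:ℝ) * r ^ j) + (θ * B) * r ^ j := by
      intro j
      have hrj : (r:ℝ) ^ j ≠ 0 := pow_ne_zero _ hr0.ne'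
      have hpj : (1 - p) ^ j ≠ 0 := pow_ne_zero _ h1p.ne'
      have hlog : Real.logb 2 ((r ^ j * θ) / ((1 - p) ^ j * p)) = (j:ℝ) * A + B := by
        rw [Real.logb_div (mul_ne_zero hrj hθ0.ne') (mul_ne_zero hpj hp0.ne'),
            Real.logb_mul hrj hθ0.ne', Real.logb_mul hpj hp0.ne',
            Real.logb_pow, Real.logb_pow, hAdef, hBdef,
            Real.logb_div hr0.ne' h1p.ne', Real.logb_div hθ0.ne' hp0.ne']
        ring
      rw [← hrdef, hlog]
      ring
    have hnorm : ‖r‖ < 1 := by rw [Real.norm_eq_abs, abs_of_pos hr0]; exact hr1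
    have hsum1 : Summable (fun j : ℕ => (j:ℝ) * r ^ j) := by
      simpa using summable_pow_mul_geometric_of_norm_lt_one 1 hnorm
    have hsum2 : Summable (fun j : ℕ => r ^ j) :=
      summable_geometric_of_lt_one hr0.le hr1
    rw [tsum_congr key, Summable.tsum_add (hsum1.mul_left _) (hsum2.mul_left _),
        tsum_mul_left, tsum_mul_left,
        tsum_coe_mul_geometric_of_norm_lt_one hnorm,
        tsum_geometric_of_lt_one hr0.le hr1]
    have h1r : 1 - r = θ := by rw [hrdef]; ring
    rw [h1r]
    have hA : A ≤ 0 := by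
      apply Real.logb_nonpos one_lt_two (by positivity)
      rw [div_le_one h1p]
      simp [hrdef]; linarith
    have hB : B ≤ 1 := by
      have : θ / p ≤ 2 := by rw [div_le_iff₀ hp0]; linarith
      calc B ≤ Real.logb 2 2 :=
              Real.logb_le_logb_of_le one_lt_two (by positivity) this
           _ = 1 := Real.logb_self_eq_one one_lt_two
    have e0 : θ * A * (r / θ ^ 2) = A * (r / θ) := by
      field_simp
    have e1 : θ * B * θ⁻¹ = B := by field_simp
    rw [e0, e1]
    have : A * (r / θ) ≤ 0 :=
      mul_nonpos_of_nonpos_of_nonneg hA (div_nonneg hr0.le hθ0.le)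
    linarith
end

section
/- Let N be a random variable on the positive integers with E[log₂ N] = μ < ∞. Then H(N) ≤ μ + log₂(μ + 1) + 1, where H denotes Shannon entropy in bits. -/
/-!
Gibbs' inequality against the zeta distribution `q j ∝ (j + 1) ^ (-s)`, `s > 1`, gives
`H(N) ≤ s μ + log₂ Z(s)` with `Z(s) = ∑ (j + 1) ^ (-s)`, and the integral test gives
`Z(s) ≤ s / (s - 1)`. Choosing `s = (μ + 1) / μ` (or `s = 2` when `μ = 0`) yields the bound.
-/

open Real Set

lemma summable_nat_add_one_rpow_neg {s : ℝ} (hs : 1 < s) :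
    Summable fun n : ℕ => ((n : ℝ) + 1) ^ (-s) := by
  exact_mod_cast (summable_nat_add_iff 1).2 (Real.summable_nat_rpow.2 (neg_lt_neg hs))

lemma tsum_nat_add_one_rpow_neg_le {s : ℝ} (hs : 1 < s) :
    ∑' n : ℕ, ((n : ℝ) + 1) ^ (-s) ≤ s / (s - 1) := by
  have hanti : AntitoneOn (fun x : ℝ => x ^ (-s)) (Ici ((1 : ℕ) : ℝ)) :=
    fun x hx y _ hxy => rpow_le_rpow_of_nonpos (by simp at hx; linarith) hxy (by linarith)
  have htail := hanti.tsum_comp_add_le_integral 1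
    (by exact_mod_cast integrableOn_Ioi_rpow_of_lt (by linarith) one_pos)
    (fun x hx => rpow_nonneg (by simp at hx; linarith) _)
  rw [Nat.cast_one, integral_Ioi_rpow_of_lt (by linarith) one_pos] at htail
  rw [(summable_nat_add_one_rpow_neg hs).tsum_eq_zero_add]
  push_cast at htail ⊢
  have hs1 : s - 1 ≠ 0 := by linarith
  calc (0 + 1) ^ (-s) + ∑' n : ℕ, ((n : ℝ) + 1 + 1) ^ (-s) ≤ 1 + -1 ^ (-s + 1) / (-s + 1) := by
        rw [zero_add, one_rpow]; linarith
    _ = s / (s - 1) := by rw [one_rpow, show -s + 1 = -(s - 1) by ring]; field_simp; ring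

lemma mul_log_sub_mul_log_le {x y : ℝ} (hx : 0 ≤ x) (hy : 0 < y) :
    x * log y - x * log x ≤ y - x := by
  rcases hx.eq_or_lt with rfl | hx
  · simpa using hy.le
  calc x * log y - x * log x = x * log (y / x) := by rw [log_div hy.ne' hx.ne']; ring
    _ ≤ x * (y / x - 1) := by gcongr; exact log_le_sub_one_of_pos (by positivity)
    _ = y - x := by field_simp

theorem neg_tsum_mul_logb_le {ι : Type*} {b c : ℝ} {p q : ι → ℝ} (hb : 1 < b)
    (hp0 : ∀ i, 0 ≤ p i) (hp1 : HasSum p 1) (hq0 : ∀ i, 0 < q i) (hq : Summable q)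
    (hq1 : ∑' i, q i ≤ 1) (hc : HasSum (fun i => p i * logb b (q i)) c) :
    -∑' i, p i * logb b (p i) ≤ -c := by
  have hlogb : 0 < log b := log_pos hb
  have hpoint : ∀ i, -(p i * logb b (p i)) ≤ (q i - p i) / log b - p i * logb b (q i) := by
    intro i
    have := div_le_div_of_nonneg_right (mul_log_sub_mul_log_le (hp0 i) (hq0 i)) hlogb.le
    simp only [logb, sub_div, mul_div_assoc] at this ⊢
    linarith
  have hnonneg : ∀ i, 0 ≤ -(p i * logb b (p i)) := fun i =>
    neg_nonneg.2 <| mul_nonpos_of_nonneg_of_nonpos (hp0 i) <|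
      logb_nonpos hb (hp0 i) (le_hasSum hp1 i fun j _ => hp0 j)
  have hbound : HasSum (fun i => (q i - p i) / log b - p i * logb b (q i))
      ((∑' i, q i - 1) / log b - c) :=
    ((hq.hasSum.sub hp1).div_const _).sub hc
  calc -∑' i, p i * logb b (p i) = ∑' i, -(p i * logb b (p i)) := tsum_neg.symm
    _ ≤ (∑' i, q i - 1) / log b - c :=
      hasSum_le hpoint (Summable.of_nonneg_of_le hnonneg hpoint hbound.summable).hasSum hbound
    _ ≤ -c := by
      have : (∑' i, q i - 1) / log b ≤ 0 := div_nonpos_of_nonpos_of_nonneg (by linarith) hlogb.le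
      linarith

theorem neg_tsum_mul_logb_le_of_hasSum_mul_logb_nat_add_one {f : ℕ → ℝ} {μ s : ℝ} (hs : 1 < s)
    (hf0 : ∀ j, 0 ≤ f j) (hf1 : HasSum f 1)
    (hμ : HasSum (fun j : ℕ => f j * logb 2 (j + 1)) μ) :
    -∑' j : ℕ, f j * logb 2 (f j) ≤ s * μ + logb 2 (s / (s - 1)) := by
  set Z := s / (s - 1)
  have hZ : 0 < Z := div_pos (by linarith) (by linarith)
  have hq0 : ∀ j : ℕ, 0 < ((j : ℝ) + 1) ^ (-s) / Z := fun j => by positivity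
  have hq1 : ∑' j : ℕ, ((j : ℝ) + 1) ^ (-s) / Z ≤ 1 := by
    rw [tsum_div_const, div_le_one hZ]
    exact tsum_nat_add_one_rpow_neg_le hs
  have hlog : ∀ j : ℕ, f j * logb 2 (((j : ℝ) + 1) ^ (-s) / Z) =
      -s * (f j * logb 2 (j + 1)) - f j * logb 2 Z := fun j => by
    rw [logb_div (by positivity) hZ.ne', logb_rpow_eq_mul_logb_of_pos (by positivity)]
    ring
  have hc : HasSum (fun j : ℕ => f j * logb 2 (((j : ℝ) + 1) ^ (-s) / Z))
      (-(s * μ + logb 2 Z)) := by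
    have := ((hμ.mul_left (-s)).sub (hf1.mul_right (logb 2 Z))).congr_fun hlog
    rwa [show -s * μ - 1 * logb 2 Z = -(s * μ + logb 2 Z) by ring] at this
  simpa using neg_tsum_mul_logb_le one_lt_two hf0 hf1 hq0
    ((summable_nat_add_one_rpow_neg hs).div_const Z) hq1 hc

/-- Maximum-entropy bound: if `N` is a random variable on the positive integers
(with pmf `f`, where `n ≥ 1` is parameterized as `n = j + 1`) and
`E[log₂ N] = μ < ∞`, then `H(N) ≤ μ + log₂(μ + 1) + 1`. -/
theorem stmt6 (f : ℕ → ℝ) (μ : ℝ)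
    (hf0 : ∀ j, 0 ≤ f j) (hf1 : HasSum f 1)
    (hμ : HasSum (fun j : ℕ => f j * Real.logb 2 (j + 1)) μ) :
    -∑' j : ℕ, f j * Real.logb 2 (f j) ≤ μ + Real.logb 2 (μ + 1) + 1 := by
  have hμ0 : 0 ≤ μ := hasSum_le (fun j => mul_nonneg (hf0 j)
    (logb_nonneg one_lt_two (by simp))) hasSum_zero hμ
  rcases hμ0.eq_or_lt with rfl | hμpos
  · have h := neg_tsum_mul_logb_le_of_hasSum_mul_logb_nat_add_one one_lt_two hf0 hf1 hμ
    norm_num at h ⊢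
    exact h
  · have h := neg_tsum_mul_logb_le_of_hasSum_mul_logb_nat_add_one
      ((one_lt_div hμpos).2 (lt_add_one μ)) hf0 hf1 hμ
    rw [div_mul_cancel₀ _ hμpos.ne', show (μ + 1) / μ / ((μ + 1) / μ - 1) = μ + 1 by
      field_simp; ring] at h
    linarith
end

section
/- Let p be an exchangeable probability distribution on 𝒳^k, where 𝒳 is a finite set. Define q(x₁,…,x_k) = ∑_{s ∈ 𝒳^k} p(s) ∏_{i=1}^k p̂_s(x_i), where p̂_s is the empirical distribution of the entries of s. Then D(p‖q) ≤ k·log₂(e). -/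
/-- Empirical distribution of a sequence `s ∈ 𝒳^k`: `p̂_s(c) = (1/k)∑_i 1{s_i = c}`. -/
noncomputable def empDist {𝒳 : Type*} [DecidableEq 𝒳] {k : ℕ} (s : Fin k → 𝒳) (c : 𝒳) : ℝ :=
  (1 / k) * ∑ i, if s i = c then 1 else 0

lemma pow_le_factorial_mul_exp (n : ℕ) : (n : ℝ) ^ n ≤ (Nat.factorial n : ℝ) * Real.exp n := by
  have h := Real.sum_le_exp_of_nonneg (x := (n : ℝ)) (by positivity) (n + 1)
  have hterm : (n : ℝ) ^ n / Nat.factorial n ≤ ∑ i ∈ Finset.range (n + 1), (n : ℝ) ^ i / Nat.factorial i := by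
    apply Finset.single_le_sum (f := fun i => (n : ℝ) ^ i / (Nat.factorial i : ℝ))
    · intro i _
      positivity
    · simp
  have h2 : (n : ℝ) ^ n / Nat.factorial n ≤ Real.exp n := hterm.trans h
  have hfac : (0 : ℝ) < (Nat.factorial n : ℝ) := by exact_mod_cast Nat.factorial_pos n
  calc (n : ℝ) ^ n = (n : ℝ) ^ n / Nat.factorial n * Nat.factorial n := by field_simp
    _ ≤ Real.exp n * Nat.factorial n := by
        apply mul_le_mul_of_nonneg_right h2 hfac.le
    _ = (Nat.factorial n : ℝ) * Real.exp n := mul_comm _ _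

lemma exp_neg_le_card_mul_prod {𝒳 : Type*} [Fintype 𝒳] (k : ℕ) (hk : 0 < k) (n : 𝒳 → ℕ) (N : ℕ)
    (hsum_n : ∑ c, n c = k)
    (horbit : N * ∏ c, Nat.factorial (n c) = Nat.factorial k) :
    Real.exp (-(k : ℝ)) ≤ (N : ℝ) * ∏ c, ((n c : ℝ) / k) ^ (n c) := by
  have hkpos : (0 : ℝ) < (k : ℝ) := by exact_mod_cast hk
  have hprodsplit : ∏ c, ((n c : ℝ) / k) ^ (n c)
      = (∏ c, (n c : ℝ) ^ (n c)) / (k : ℝ) ^ k := by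
    have hkk : (k : ℝ) ^ k = ∏ c, (k : ℝ) ^ (n c) := by
      rw [Finset.prod_pow_eq_pow_sum, hsum_n]
    rw [eq_div_iff (by positivity), hkk, ← Finset.prod_mul_distrib]
    apply Finset.prod_congr rfl
    intro c _
    rw [div_pow]
    field_simp
  rw [hprodsplit]
  rw [mul_div_assoc', le_div_iff₀ (by positivity)]
  have hfac1 : Real.exp (-(k : ℝ)) * (k : ℝ) ^ k ≤ (Nat.factorial k : ℝ) := by
    have := pow_le_factorial_mul_exp k
    rw [Real.exp_neg]
    rw [inv_mul_le_iff₀ (Real.exp_pos _), mul_comm (Real.exp _) _]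
    exact this
  have hfac2 : (∏ c, (Nat.factorial (n c) : ℝ)) ≤ ∏ c, (n c : ℝ) ^ (n c) := by
    apply Finset.prod_le_prod
    · intro c _; positivity
    · intro c _; exact_mod_cast Nat.factorial_le_pow (n c)
  have hOrbitR : (N : ℝ) * ∏ c, (Nat.factorial (n c) : ℝ) = (Nat.factorial k : ℝ) := by
    exact_mod_cast congrArg (Nat.cast : ℕ → ℝ) horbit
  calc Real.exp (-(k : ℝ)) * (k : ℝ) ^ k ≤ (Nat.factorial k : ℝ) := hfac1
    _ = (N : ℝ) * ∏ c, (Nat.factorial (n c) : ℝ) := hOrbitR.symm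
    _ ≤ (N : ℝ) * ∏ c, (n c : ℝ) ^ (n c) :=
        mul_le_mul_of_nonneg_left hfac2 (Nat.cast_nonneg _)

/-- Urn-codebook bound: for an exchangeable distribution `p` on `𝒳^k` and
`q(x) = ∑_s p(s) ∏_i p̂_s(x_i)`, one has `D(p‖q) ≤ k·log₂ e`. -/
theorem stmt7 {𝒳 : Type*} [Fintype 𝒳] [DecidableEq 𝒳] (k : ℕ) (hk : 0 < k)
    (p : (Fin k → 𝒳) → ℝ)
    (hp0 : ∀ x, 0 ≤ p x) (hp1 : ∑ x, p x = 1)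
    (hexch : ∀ (σ : Equiv.Perm (Fin k)) (x : Fin k → 𝒳), p (x ∘ σ) = p x)
    (q : (Fin k → 𝒳) → ℝ)
    (hq : ∀ x, q x = ∑ s, p s * ∏ i, empDist s (x i)) :
    ∑ x, p x * Real.logb 2 (p x / q x) ≤ k * Real.logb 2 (Real.exp 1) := by
  classical
  have hemp0 : ∀ (s : Fin k → 𝒳) (c : 𝒳), 0 ≤ empDist s c := by
    intro s c
    unfold empDist
    apply mul_nonneg (by positivity)
    apply Finset.sum_nonneg
    intro i _
    split <;> norm_num
  have key : ∀ x : Fin k → 𝒳,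
      p x * Real.logb 2 (p x / q x) ≤ p x * (k * Real.logb 2 (Real.exp 1)) := by
    intro x
    rcases eq_or_lt_of_le (hp0 x) with h0 | hpx
    · simp [← h0]
    -- counts
    set n : 𝒳 → ℕ := fun c => (Finset.univ.filter (fun i => x i = c)).card with hn
    have hsum_n : ∑ c, n c = k := by
      have := Finset.card_eq_sum_card_fiberwise
        (f := x) (s := Finset.univ) (t := Finset.univ) (fun i _ => Finset.mem_univ (x i))
      simpa using this.symm
    -- empirical distribution of x
    have hempx : ∀ c, empDist x c = (n c : ℝ) / k := by
      intro c
      unfold empDist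
      rw [Finset.sum_boole]
      simp [hn, div_eq_mul_inv, mul_comm]
    have hA : ∏ i, empDist x (x i) = ∏ c, ((n c : ℝ) / k) ^ (n c) := by
      have h1 : ∏ i, empDist x (x i)
          = ∏ c, ∏ i ∈ Finset.univ.filter (fun i => x i = c), empDist x (x i) :=
        (Finset.prod_fiberwise_of_maps_to (fun i _ => Finset.mem_univ (x i)) _).symm
      rw [h1]
      apply Finset.prod_congr rfl
      intro c _
      rw [Finset.prod_congr rfl (fun i hi => by
        rw [hempx, (Finset.mem_filter.mp hi).2])]
      rw [Finset.prod_const]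
    -- orbit of x under permutations
    set T : Finset (Fin k → 𝒳) :=
      Finset.image (fun σ : Equiv.Perm (Fin k) => x ∘ σ) Finset.univ with hT
    -- stabilizer cardinality
    have hstab : (Finset.univ.filter (fun σ : Equiv.Perm (Fin k) => x ∘ σ = x)).card
        = ∏ c, Nat.factorial (n c) := by
      rw [← Fintype.card_subtype]
      rw [DomMulAct.stabilizer_card]
      apply Finset.prod_congr rfl
      intro c _
      rw [Fintype.card_subtype]
    -- orbit-stabilizer
    have horbit : T.card * ∏ c, Nat.factorial (n c) = Nat.factorial k := by
      rw [← hstab]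
      have hcard : (Finset.univ : Finset (Equiv.Perm (Fin k))).card
          = ∑ s ∈ T, (Finset.univ.filter (fun σ : Equiv.Perm (Fin k) => x ∘ σ = s)).card :=
        Finset.card_eq_sum_card_fiberwise (fun σ _ => Finset.mem_image_of_mem _ (Finset.mem_univ σ))
      have hfib : ∀ s ∈ T, (Finset.univ.filter (fun σ : Equiv.Perm (Fin k) => x ∘ σ = s)).card
          = (Finset.univ.filter (fun σ : Equiv.Perm (Fin k) => x ∘ σ = x)).card := by
        intro s hs
        obtain ⟨σ₀, _, hσ₀⟩ := Finset.mem_image.mp hs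
        apply Finset.card_bij' (fun τ _ => τ * σ₀⁻¹) (fun ρ _ => ρ * σ₀)
        · intro τ hτ
          simp only [Finset.mem_filter, Finset.mem_univ, true_and] at hτ ⊢
          funext i
          have := congrFun hτ (σ₀⁻¹ i)
          have h2 := congrFun hσ₀ (σ₀⁻¹ i)
          simp only [Function.comp_apply, Equiv.Perm.mul_apply] at this h2 ⊢
          rw [this, ← h2]
          simp
        · intro ρ hρ
          simp only [Finset.mem_filter, Finset.mem_univ, true_and] at hρ ⊢
          funext i
          have := congrFun hρ (σ₀ i)
          have h2 := congrFun hσ₀ i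
          simp only [Function.comp_apply, Equiv.Perm.mul_apply] at this h2 ⊢
          rw [this, ← h2]
        · intro τ _; simp [mul_assoc]
        · intro ρ _; simp [mul_assoc]
      rw [Finset.sum_congr rfl hfib, Finset.sum_const, smul_eq_mul] at hcard
      rw [← hcard]
      simp [Fintype.card_perm]
    -- each orbit element contributes p x * A
    have hterm : ∀ s ∈ T, p s * ∏ i, empDist s (x i) = p x * ∏ i, empDist x (x i) := by
      intro s hs
      obtain ⟨σ, _, hσ⟩ := Finset.mem_image.mp hs
      subst hσ
      rw [hexch σ x]
      congr 1
      apply Finset.prod_congr rfl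
      intro i _
      unfold empDist
      congr 1
      exact Equiv.sum_comp σ (fun j => if x j = x i then (1 : ℝ) else 0)
    -- lower bound on q x
    have hql : p x * ((T.card : ℝ) * ∏ c, ((n c : ℝ) / k) ^ (n c)) ≤ q x := by
      rw [hq x]
      have hsub : ∑ s ∈ T, (p s * ∏ i, empDist s (x i)) ≤ ∑ s, p s * ∏ i, empDist s (x i) := by
        apply Finset.sum_le_sum_of_subset_of_nonneg (Finset.subset_univ T)
        intro s _ _
        exact mul_nonneg (hp0 s) (Finset.prod_nonneg fun i _ => hemp0 s (x i))
      refine le_trans (le_of_eq ?_) hsub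
      rw [Finset.sum_congr rfl hterm, Finset.sum_const, nsmul_eq_mul, hA]
      ring
    -- numeric bound : T.card * ∏ (n c / k)^(n c) ≥ exp (-k)
    have hnum : Real.exp (-(k : ℝ)) ≤ (T.card : ℝ) * ∏ c, ((n c : ℝ) / k) ^ (n c) :=
      exp_neg_le_card_mul_prod k hk n T.card hsum_n horbit
    -- combine: q x ≥ p x * exp(-k)
    have hqlow : p x * Real.exp (-(k : ℝ)) ≤ q x :=
      le_trans (mul_le_mul_of_nonneg_left hnum hpx.le) hql
    have hqpos : 0 < q x := lt_of_lt_of_le (by positivity) hqlow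
    have hratio : p x / q x ≤ Real.exp k := by
      rw [div_le_iff₀ hqpos]
      calc p x = p x * Real.exp (-(k : ℝ)) * Real.exp k := by
            rw [mul_assoc, ← Real.exp_add]; simp
        _ ≤ q x * Real.exp k := mul_le_mul_of_nonneg_right hqlow (Real.exp_pos _).le
        _ = Real.exp k * q x := mul_comm _ _
    have hlogb : Real.logb 2 (p x / q x) ≤ (k : ℝ) * Real.logb 2 (Real.exp 1) := by
      have h1 : Real.logb 2 (p x / q x) ≤ Real.logb 2 (Real.exp k) :=
        Real.logb_le_logb_of_le (by norm_num) (by positivity) hratio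
      refine h1.trans (le_of_eq ?_)
      rw [← Real.exp_one_pow, Real.logb_pow]
    exact mul_le_mul_of_nonneg_left hlogb hpx.le
  calc ∑ x, p x * Real.logb 2 (p x / q x)
      ≤ ∑ x, p x * ((k : ℝ) * Real.logb 2 (Real.exp 1)) := Finset.sum_le_sum fun x _ => key x
    _ = (k : ℝ) * Real.logb 2 (Real.exp 1) := by rw [← Finset.sum_mul, hp1, one_mul]
end

section
/- Let p be an exchangeable probability distribution on 𝒳^k, where 𝒳 is a finite set. Define q(x₁,…,x_k) = ∑_{s ∈ 𝒳^k} p(s) ∏_{i=1}^k p̂_s(x_i), with p̂_s the empirical distribution of s. Then D(p‖q) ≤ |𝒳|·log₂(k+1). -/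
/-- count of value c in tuple s -/
def cntAux {𝒳 : Type*} [DecidableEq 𝒳] {k : ℕ} (s : Fin k → 𝒳) (c : 𝒳) : ℕ :=
  (Finset.univ.filter (fun i => s i = c)).card

lemma aux_pow_fact_le (m d : ℕ) : m ^ d * m.factorial ≤ (m + d).factorial := by
  induction d with
  | zero => simp
  | succ d ih =>
    calc m ^ (d+1) * m.factorial = m * (m ^ d * m.factorial) := by ring
    _ ≤ m * (m + d).factorial := Nat.mul_le_mul_left _ ih
    _ ≤ (m + d + 1) * (m + d).factorial := Nat.mul_le_mul_right _ (by omega)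
    _ = (m + (d+1)).factorial := by rw [← Nat.factorial_succ]; ring_nf

lemma aux_fact_le_pow (n d : ℕ) : (n + d).factorial ≤ (n + d) ^ d * n.factorial := by
  induction d with
  | zero => simp
  | succ d ih =>
    calc (n + (d+1)).factorial = (n + d + 1) * (n + d).factorial := by rw [← Nat.factorial_succ]; ring_nf
    _ ≤ (n + d + 1) * ((n + d) ^ d * n.factorial) := Nat.mul_le_mul_left _ ih
    _ ≤ (n + d + 1) * ((n + d + 1) ^ d * n.factorial) :=
        Nat.mul_le_mul_left _ (Nat.mul_le_mul_right _ (Nat.pow_le_pow_left (by omega) _))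
    _ = (n + (d+1)) ^ (d+1) * n.factorial := by ring_nf

/-- key per-letter inequality: m^n * m! ≤ m^m * n! -/
lemma key_nat (m n : ℕ) : m ^ n * m.factorial ≤ m ^ m * n.factorial := by
  rcases le_or_gt m n with h | h
  · obtain ⟨d, rfl⟩ := Nat.exists_eq_add_of_le h
    calc m ^ (m + d) * m.factorial = m ^ m * (m ^ d * m.factorial) := by ring
    _ ≤ m ^ m * (m + d).factorial := Nat.mul_le_mul_left _ (aux_pow_fact_le m d)
  · obtain ⟨d, rfl⟩ : ∃ d, m = n + d := ⟨m - n, by omega⟩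
    calc (n + d) ^ n * (n + d).factorial
        ≤ (n + d) ^ n * ((n + d) ^ d * n.factorial) :=
          Nat.mul_le_mul_left _ (aux_fact_le_pow n d)
    _ = (n + d) ^ (n + d) * n.factorial := by ring


lemma empDist_eq {𝒳 : Type*} [DecidableEq 𝒳] {k : ℕ} (s : Fin k → 𝒳) (c : 𝒳) :
    empDist s c = (cntAux s c : ℝ) / k := by
  rw [empDist, cntAux, Finset.sum_boole]
  ring

lemma empDist_nonneg {𝒳 : Type*} [DecidableEq 𝒳] {k : ℕ} (s : Fin k → 𝒳) (c : 𝒳) :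
    0 ≤ empDist s c := by
  rw [empDist_eq]; positivity

lemma sum_cntAux {𝒳 : Type*} [Fintype 𝒳] [DecidableEq 𝒳] {k : ℕ} (s : Fin k → 𝒳) :
    ∑ c, cntAux s c = k := by
  have := (Finset.card_eq_sum_card_fiberwise (fun i (_ : i ∈ Finset.univ) => Finset.mem_univ (s i))).symm
  simpa [cntAux] using this

lemma sum_empDist {𝒳 : Type*} [Fintype 𝒳] [DecidableEq 𝒳] {k : ℕ} (hk : 0 < k)
    (s : Fin k → 𝒳) : ∑ c, empDist s c = 1 := by
  have h := sum_cntAux s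
  have hk' : (k : ℝ) ≠ 0 := Nat.cast_ne_zero.mpr hk.ne'
  simp only [empDist_eq]
  rw [← Finset.sum_div, ← Nat.cast_sum, h, div_self hk']

lemma cntAux_le {𝒳 : Type*} [DecidableEq 𝒳] {k : ℕ} (s : Fin k → 𝒳) (c : 𝒳) :
    cntAux s c ≤ k := by
  have := Finset.card_filter_le Finset.univ (fun i => s i = c)
  simpa [cntAux] using this

/-- ∏ i, f (y i) = ∏ c, f c ^ cntAux y c -/
lemma prod_comp_cnt {𝒳 : Type*} [Fintype 𝒳] [DecidableEq 𝒳] {k : ℕ} (f : 𝒳 → ℝ)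
    (y : Fin k → 𝒳) : ∏ i, f (y i) = ∏ c, f c ^ cntAux y c := by
  rw [Finset.prod_comp f y]
  refine Finset.prod_subset (Finset.subset_univ _) fun c _ hc => ?_
  have : cntAux y c = 0 := by
    rw [cntAux, Finset.card_eq_zero, Finset.filter_eq_empty_iff]
    intro i _ hi
    exact hc (Finset.mem_image.mpr ⟨i, Finset.mem_univ i, hi⟩)
  rw [← cntAux]  -- align the filter card with cntAux
  rw [this, pow_zero]


lemma cntAux_eq_card {𝒳 : Type*} [DecidableEq 𝒳] {k : ℕ} (s : Fin k → 𝒳) (c : 𝒳) :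
    cntAux s c = Fintype.card {i // s i = c} := (Fintype.card_subtype _).symm

lemma cntAux_comp_perm {𝒳 : Type*} [DecidableEq 𝒳] {k : ℕ} (y0 : Fin k → 𝒳)
    (σ : Equiv.Perm (Fin k)) (c : 𝒳) : cntAux (y0 ∘ σ) c = cntAux y0 c := by
  rw [cntAux_eq_card, cntAux_eq_card]
  exact Fintype.card_congr (σ.subtypeEquiv fun i => Iff.rfl)

noncomputable def typeF {𝒳 : Type*} [Fintype 𝒳] [DecidableEq 𝒳] {k : ℕ} (y0 : Fin k → 𝒳)
    (a : Σ y : {y : Fin k → 𝒳 // ∀ c, cntAux y c = cntAux y0 c},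
      ∀ c, {i // y.1 i = c} ≃ {i // y0 i = c}) : Equiv.Perm (Fin k) :=
  (Equiv.sigmaFiberEquiv a.1.1).symm.trans
    ((Equiv.sigmaCongrRight a.2).trans (Equiv.sigmaFiberEquiv y0))

lemma typeF_apply {𝒳 : Type*} [Fintype 𝒳] [DecidableEq 𝒳] {k : ℕ} (y0 : Fin k → 𝒳)
    (a) (i : Fin k) : typeF y0 a i = (a.2 (a.1.1 i) ⟨i, rfl⟩).1 := rfl

lemma typeF_bij {𝒳 : Type*} [Fintype 𝒳] [DecidableEq 𝒳] {k : ℕ} (y0 : Fin k → 𝒳) :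
    Function.Bijective (typeF y0) := by
  constructor
  · rintro ⟨⟨y, hy⟩, e⟩ ⟨⟨y', hy'⟩, e'⟩ h
    have hyy' : y = y' := by
      funext i
      have h1 : y0 (typeF y0 ⟨⟨y, hy⟩, e⟩ i) = y i := (e (y i) ⟨i, rfl⟩).2
      have h2 : y0 (typeF y0 ⟨⟨y', hy'⟩, e'⟩ i) = y' i := (e' (y' i) ⟨i, rfl⟩).2
      rw [← h1, ← h2, h]
    subst hyy'
    have he : e = e' := by
      funext c
      ext ⟨i, hi⟩
      subst hi
      have : (e (y i) ⟨i, rfl⟩).1 = (e' (y i) ⟨i, rfl⟩).1 := by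
        have := congrFun (congrArg (fun (σ : Equiv.Perm (Fin k)) => (σ : Fin k → Fin k)) h) i
        exact this
      exact congrArg Fin.val this
    subst he
    rfl
  · intro σ
    refine ⟨⟨⟨y0 ∘ σ, fun c => cntAux_comp_perm y0 σ c⟩,
      fun c => σ.subtypeEquiv fun i => Iff.rfl⟩, ?_⟩
    ext i
    rfl

lemma card_type_class {𝒳 : Type*} [Fintype 𝒳] [DecidableEq 𝒳] {k : ℕ} (y0 : Fin k → 𝒳) :
    (Finset.univ.filter (fun y : Fin k → 𝒳 => ∀ c, cntAux y c = cntAux y0 c)).card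
      * ∏ c, (cntAux y0 c).factorial = k.factorial := by
  have h1 : Fintype.card (Σ y : {y : Fin k → 𝒳 // ∀ c, cntAux y c = cntAux y0 c},
      ∀ c, {i // y.1 i = c} ≃ {i // y0 i = c}) = Fintype.card (Equiv.Perm (Fin k)) :=
    Fintype.card_congr (Equiv.ofBijective _ (typeF_bij y0))
  rw [Fintype.card_sigma] at h1
  have h2 : ∀ y : {y : Fin k → 𝒳 // ∀ c, cntAux y c = cntAux y0 c},
      Fintype.card (∀ c, {i // y.1 i = c} ≃ {i // y0 i = c})
        = ∏ c, (cntAux y0 c).factorial := by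
    intro y
    rw [Fintype.card_pi]
    refine Finset.prod_congr rfl fun c _ => ?_
    have hcard : Fintype.card {i // y.1 i = c} = Fintype.card {i // y0 i = c} := by
      rw [← cntAux_eq_card, ← cntAux_eq_card]; exact y.2 c
    rw [Fintype.card_equiv (Fintype.equivOfCardEq hcard), ← cntAux_eq_card]
    exact congrArg Nat.factorial (y.2 c)
  simp only [h2, Finset.sum_const, smul_eq_mul] at h1
  rw [Fintype.card_perm, Fintype.card_fin] at h1
  rw [← h1, ← Fintype.card_subtype]
  rfl

lemma fiber_nat_le {𝒳 : Type*} [Fintype 𝒳] [DecidableEq 𝒳] {k : ℕ} (x y : Fin k → 𝒳) :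
    (Finset.univ.filter (fun z : Fin k → 𝒳 => ∀ c, cntAux z c = cntAux y c)).card
        * ∏ c, (cntAux x c) ^ (cntAux y c)
      ≤ (Finset.univ.filter (fun z : Fin k → 𝒳 => ∀ c, cntAux z c = cntAux x c)).card
        * ∏ c, (cntAux x c) ^ (cntAux x c) := by
  set Ny := (Finset.univ.filter (fun z : Fin k → 𝒳 => ∀ c, cntAux z c = cntAux y c)).card
  set Nx := (Finset.univ.filter (fun z : Fin k → 𝒳 => ∀ c, cntAux z c = cntAux x c)).card
  have hy := card_type_class y
  have hx := card_type_class x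
  have hpos : 0 < (∏ c, (cntAux y c).factorial) * ∏ c, (cntAux x c).factorial := by
    apply Nat.mul_pos <;> exact Finset.prod_pos fun c _ => Nat.factorial_pos _
  apply Nat.le_of_mul_le_mul_right _ hpos
  calc Ny * (∏ c, (cntAux x c) ^ (cntAux y c))
        * ((∏ c, (cntAux y c).factorial) * ∏ c, (cntAux x c).factorial)
      = (Ny * ∏ c, (cntAux y c).factorial)
        * ∏ c, (cntAux x c) ^ (cntAux y c) * (cntAux x c).factorial := by
        rw [Finset.prod_mul_distrib]; ring
    _ = k.factorial * ∏ c, (cntAux x c) ^ (cntAux y c) * (cntAux x c).factorial := by rw [hy]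
    _ ≤ k.factorial * ∏ c, (cntAux x c) ^ (cntAux x c) * (cntAux y c).factorial := by
        apply Nat.mul_le_mul_left
        exact Finset.prod_le_prod' fun c _ => key_nat (cntAux x c) (cntAux y c)
    _ = (Nx * ∏ c, (cntAux x c).factorial)
        * ∏ c, (cntAux x c) ^ (cntAux x c) * (cntAux y c).factorial := by rw [hx]
    _ = Nx * (∏ c, (cntAux x c) ^ (cntAux x c))
        * ((∏ c, (cntAux y c).factorial) * ∏ c, (cntAux x c).factorial) := by
        rw [Finset.prod_mul_distrib]; ring

lemma prod_empDist_pow {𝒳 : Type*} [Fintype 𝒳] [DecidableEq 𝒳] {k : ℕ} (x y : Fin k → 𝒳) :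
    ∏ c, empDist x c ^ cntAux y c
      = (∏ c, (cntAux x c : ℝ) ^ cntAux y c) / (k : ℝ) ^ k := by
  simp only [empDist_eq, div_pow]
  rw [Finset.prod_div_distrib, Finset.prod_pow_eq_pow_sum, sum_cntAux]

lemma fiber_real_le {𝒳 : Type*} [Fintype 𝒳] [DecidableEq 𝒳] {k : ℕ} (x y : Fin k → 𝒳) :
    ((Finset.univ.filter (fun z : Fin k → 𝒳 => ∀ c, cntAux z c = cntAux y c)).card : ℝ)
        * ∏ c, empDist x c ^ cntAux y c
      ≤ ((Finset.univ.filter (fun z : Fin k → 𝒳 => ∀ c, cntAux z c = cntAux x c)).card : ℝ)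
        * ∏ c, empDist x c ^ cntAux x c := by
  rw [prod_empDist_pow x y, prod_empDist_pow x x, mul_div_assoc', mul_div_assoc']
  have hkk : (0:ℝ) < (k:ℝ)^k := by
    rcases Nat.eq_zero_or_pos k with h | h
    · subst h; norm_num
    · positivity
  refine div_le_div_of_nonneg_right ?_ hkk.le
  have h := fiber_nat_le x y
  have h' : ((Finset.univ.filter (fun z : Fin k → 𝒳 => ∀ c, cntAux z c = cntAux y c)).card
        * ∏ c, (cntAux x c) ^ (cntAux y c) : ℝ)
      ≤ ((Finset.univ.filter (fun z : Fin k → 𝒳 => ∀ c, cntAux z c = cntAux x c)).card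
        * ∏ c, (cntAux x c) ^ (cntAux x c) : ℝ) := by exact_mod_cast h
  push_cast at h'
  exact h'


lemma type_class_bound {𝒳 : Type*} [Fintype 𝒳] [DecidableEq 𝒳] {k : ℕ} (hk : 0 < k)
    (x : Fin k → 𝒳) :
    (1:ℝ) ≤ (k+1:ℝ) ^ (Fintype.card 𝒳) *
      (((Finset.univ.filter (fun z : Fin k → 𝒳 => ∀ c, cntAux z c = cntAux x c)).card : ℝ)
        * ∏ c, empDist x c ^ cntAux x c) := by
  set A := (((Finset.univ.filter (fun z : Fin k → 𝒳 => ∀ c, cntAux z c = cntAux x c)).card : ℝ)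
        * ∏ c, empDist x c ^ cntAux x c) with hA
  have hAnn : 0 ≤ A := by
    apply mul_nonneg (Nat.cast_nonneg _)
    exact Finset.prod_nonneg fun c _ => pow_nonneg (empDist_nonneg x c) _
  have h1 : (1:ℝ) = ∑ y : Fin k → 𝒳, ∏ c, empDist x c ^ cntAux y c := by
    have e1 : (1:ℝ) = ∏ _i : Fin k, (∑ c, empDist x c) := by
      rw [sum_empDist hk x, Finset.prod_const, one_pow]
    rw [e1, Finset.prod_univ_sum, Fintype.piFinset_univ]
    exact Finset.sum_congr rfl fun y _ => prod_comp_cnt (empDist x) y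
  set typ : (Fin k → 𝒳) → (𝒳 → Fin (k+1)) :=
    fun y c => ⟨cntAux y c, Nat.lt_succ_of_le (cntAux_le y c)⟩ with htyp
  have h2 : (1:ℝ) = ∑ T : 𝒳 → Fin (k+1),
      ∑ y ∈ Finset.univ.filter (fun y => typ y = T), ∏ c, empDist x c ^ cntAux y c := by
    rw [Finset.sum_fiberwise Finset.univ typ (fun y => ∏ c, empDist x c ^ cntAux y c)]
    exact h1
  have h3 : ∀ T : 𝒳 → Fin (k+1),
      ∑ y ∈ Finset.univ.filter (fun y => typ y = T), (∏ c, empDist x c ^ cntAux y c) ≤ A := by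
    intro T
    rcases Finset.eq_empty_or_nonempty (Finset.univ.filter (fun y => typ y = T)) with he | ⟨y₁, hy₁⟩
    · rw [he, Finset.sum_empty]; exact hAnn
    · have hy₁' : typ y₁ = T := (Finset.mem_filter.mp hy₁).2
      have hfib : Finset.univ.filter (fun y => typ y = T)
          = Finset.univ.filter (fun z : Fin k → 𝒳 => ∀ c, cntAux z c = cntAux y₁ c) := by
        apply Finset.filter_congr
        intro z _
        rw [← hy₁']
        constructor
        · intro h c
          have := congrFun h c
          exact congrArg Fin.val this
        · intro h
          funext c
          exact Fin.ext (h c)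
      rw [hfib]
      have hconst : ∀ z ∈ Finset.univ.filter
          (fun z : Fin k → 𝒳 => ∀ c, cntAux z c = cntAux y₁ c),
          (∏ c, empDist x c ^ cntAux z c) = ∏ c, empDist x c ^ cntAux y₁ c := by
        intro z hz
        exact Finset.prod_congr rfl fun c _ => by rw [(Finset.mem_filter.mp hz).2 c]
      rw [Finset.sum_congr rfl hconst, Finset.sum_const, nsmul_eq_mul]
      exact fiber_real_le x y₁
  calc (1:ℝ) = ∑ T : 𝒳 → Fin (k+1),
      ∑ y ∈ Finset.univ.filter (fun y => typ y = T), ∏ c, empDist x c ^ cntAux y c := h2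
    _ ≤ ∑ _T : 𝒳 → Fin (k+1), A := Finset.sum_le_sum fun T _ => h3 T
    _ = (Fintype.card (𝒳 → Fin (k+1)) : ℝ) * A := by
        rw [Finset.sum_const, nsmul_eq_mul, Finset.card_univ]
    _ = (k+1:ℝ) ^ (Fintype.card 𝒳) * A := by
        rw [Fintype.card_fun, Fintype.card_fin]
        push_cast
        ring

lemma exists_perm_of_cnt_eq {𝒳 : Type*} [Fintype 𝒳] [DecidableEq 𝒳] {k : ℕ}
    {x s : Fin k → 𝒳} (h : ∀ c, cntAux s c = cntAux x c) :
    ∃ σ : Equiv.Perm (Fin k), x ∘ σ = s := by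
  have e : ∀ c, {i // s i = c} ≃ {i // x i = c} := fun c =>
    Fintype.equivOfCardEq (by rw [← cntAux_eq_card, ← cntAux_eq_card]; exact h c)
  refine ⟨typeF x ⟨⟨s, h⟩, e⟩, ?_⟩
  funext i
  exact (e (s i) ⟨i, rfl⟩).2

lemma empDist_eq_of_cnt_eq {𝒳 : Type*} [Fintype 𝒳] [DecidableEq 𝒳] {k : ℕ}
    {x s : Fin k → 𝒳} (h : ∀ c, cntAux s c = cntAux x c) : empDist s = empDist x := by
  funext c
  rw [empDist_eq, empDist_eq, h c]


/-- Urn-codebook bound: for an exchangeable distribution `p` on `𝒳^k` and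
`q(x) = ∑_s p(s) ∏_i p̂_s(x_i)`, one has `D(p‖q) ≤ |𝒳|·log₂(k+1)`. -/
theorem stmt8 {𝒳 : Type*} [Fintype 𝒳] [DecidableEq 𝒳] (k : ℕ) (hk : 0 < k)
    (p : (Fin k → 𝒳) → ℝ)
    (hp0 : ∀ x, 0 ≤ p x) (hp1 : ∑ x, p x = 1)
    (hexch : ∀ (σ : Equiv.Perm (Fin k)) (x : Fin k → 𝒳), p (x ∘ σ) = p x)
    (q : (Fin k → 𝒳) → ℝ)
    (hq : ∀ x, q x = ∑ s, p s * ∏ i, empDist s (x i)) :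
    ∑ x, p x * Real.logb 2 (p x / q x) ≤ (Fintype.card 𝒳) * Real.logb 2 (k + 1) := by
  set K : ℝ := (k+1:ℝ) ^ (Fintype.card 𝒳) with hK
  have hKpos : 0 < K := by positivity
  -- q lower bound
  have hqlb : ∀ x, p x ≤ K * q x := by
    intro x
    have hql : ((Finset.univ.filter (fun z : Fin k → 𝒳 => ∀ c, cntAux z c = cntAux x c)).card : ℝ)
        * (p x * ∏ c, empDist x c ^ cntAux x c) ≤ q x := by
      rw [hq x]
      calc ((Finset.univ.filter (fun z : Fin k → 𝒳 => ∀ c, cntAux z c = cntAux x c)).card : ℝ)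
            * (p x * ∏ c, empDist x c ^ cntAux x c)
          = ∑ _s ∈ Finset.univ.filter (fun z : Fin k → 𝒳 => ∀ c, cntAux z c = cntAux x c),
            (p x * ∏ c, empDist x c ^ cntAux x c) := by
            rw [Finset.sum_const, nsmul_eq_mul]
        _ = ∑ s ∈ Finset.univ.filter (fun z : Fin k → 𝒳 => ∀ c, cntAux z c = cntAux x c),
            p s * ∏ i, empDist s (x i) := by
            refine Finset.sum_congr rfl fun s hs => ?_
            have hcnt := (Finset.mem_filter.mp hs).2
            obtain ⟨σ, hσ⟩ := exists_perm_of_cnt_eq hcnt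
            have hps : p s = p x := by rw [← hσ, hexch]
            rw [hps, empDist_eq_of_cnt_eq hcnt, prod_comp_cnt (empDist x) x]
        _ ≤ ∑ s, p s * ∏ i, empDist s (x i) := by
            apply Finset.sum_le_sum_of_subset_of_nonneg (Finset.subset_univ _)
            intro s _ _
            exact mul_nonneg (hp0 s)
              (Finset.prod_nonneg fun i _ => empDist_nonneg s (x i))
    calc p x = p x * 1 := (mul_one _).symm
      _ ≤ p x * ((k+1:ℝ) ^ (Fintype.card 𝒳) *
          (((Finset.univ.filter (fun z : Fin k → 𝒳 => ∀ c, cntAux z c = cntAux x c)).card : ℝ)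
            * ∏ c, empDist x c ^ cntAux x c)) :=
          mul_le_mul_of_nonneg_left (type_class_bound hk x) (hp0 x)
      _ = K * (((Finset.univ.filter
            (fun z : Fin k → 𝒳 => ∀ c, cntAux z c = cntAux x c)).card : ℝ)
            * (p x * ∏ c, empDist x c ^ cntAux x c)) := by rw [hK]; ring
      _ ≤ K * q x := mul_le_mul_of_nonneg_left hql hKpos.le
  -- pointwise bound on final sum
  have hpt : ∀ x, p x * Real.logb 2 (p x / q x)
      ≤ p x * ((Fintype.card 𝒳) * Real.logb 2 (k + 1)) := by
    intro x
    rcases eq_or_lt_of_le (hp0 x) with h0 | h0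
    · rw [← h0]; simp
    · have hqpos : 0 < q x := by
        by_contra hqn
        push_neg at hqn
        have : K * q x ≤ 0 := mul_nonpos_of_nonneg_of_nonpos hKpos.le hqn
        linarith [hqlb x]
      have hratio : p x / q x ≤ K := (div_le_iff₀ hqpos).mpr (by linarith [hqlb x, mul_comm K (q x)])
      have hpq : 0 < p x / q x := div_pos h0 hqpos
      have hlog : Real.logb 2 (p x / q x) ≤ Real.logb 2 K :=
        Real.logb_le_logb_of_le one_lt_two hpq hratio
      have hKlog : Real.logb 2 K = (Fintype.card 𝒳) * Real.logb 2 (k + 1) := by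
        rw [hK, Real.logb_pow]
      rw [← hKlog]
      exact mul_le_mul_of_nonneg_left hlog h0.le
  calc ∑ x, p x * Real.logb 2 (p x / q x)
      ≤ ∑ x, p x * ((Fintype.card 𝒳) * Real.logb 2 (k + 1)) := Finset.sum_le_sum fun x _ => hpt x
    _ = (Fintype.card 𝒳) * Real.logb 2 (k + 1) := by
        rw [← Finset.sum_mul, hp1, one_mul]
end

section
/- For a finite alphabet 𝒳 and a sequence x ∈ 𝒳^k, the size of its type class T_x = { s ∈ 𝒳^k : p̂_s = p̂_x } satisfies |T_x| ≥ 2^{k H(p̂_x)} / (k+1)^{|𝒳|}, where H(p̂_x) is the entropy in bits of the empirical distribution of x. -/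
/-!
Under the i.i.d. law `q^k` with `q = p̂_x`, a sequence `s` has probability `∏_c q_c ^ n_s(c)`,
where `n_s(c)` counts the occurrences of `c` in `s`; in particular `x` itself has probability
`2^{-k H(p̂_x)}`. The type class of `s` has `k! / ∏_c n_s(c)!` elements, and the inequality
`n! n^m ≤ m! n^n` then shows that the type class of `x` is the most probable one. As there are at
most `(k+1)^|𝒳|` type classes, `1 ≤ (k+1)^|𝒳| |T_x| 2^{-k H(p̂_x)}`. Multiplying all
probabilities by `k^k` keeps the counting argument in `ℕ`.
-/

open Finset Nat

lemma factorial_mul_pow_le_factorial_mul_pow (n m : ℕ) : n ! * n ^ m ≤ m ! * n ^ n := by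
  rcases le_total n m with h | h
  · calc n ! * n ^ m = n ! * n ^ (m - n) * n ^ n := by
          rw [mul_assoc, ← pow_add, Nat.sub_add_cancel h]
      _ ≤ m ! * n ^ n := Nat.mul_le_mul_right _ (factorial_mul_pow_sub_le_factorial h)
  · calc n ! * n ^ m = m ! * n.descFactorial (n - m) * n ^ m := by
          rw [← factorial_mul_descFactorial (Nat.sub_le n m), Nat.sub_sub_self h]
      _ ≤ m ! * n ^ (n - m) * n ^ m := by gcongr; exact descFactorial_le_pow _ _
      _ = m ! * n ^ n := by rw [mul_assoc, ← pow_add, Nat.sub_add_cancel h]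

section TypeClass

variable {ι α : Type*} [Fintype ι] [DecidableEq α]

def letterCount (s : ι → α) (c : α) : ℕ := #{i | s i = c}

lemma letterCount_le (s : ι → α) (c : α) : letterCount s c ≤ Fintype.card ι :=
  card_filter_le _ _

lemma sum_letterCount [Fintype α] (s : ι → α) : ∑ c, letterCount s c = Fintype.card ι :=
  (card_eq_sum_card_fiberwise fun i _ => mem_univ (s i)).symm

lemma prod_comp_eq_prod_pow_letterCount [Fintype α] {M : Type*} [CommMonoid M] (w : α → M)
    (s : ι → α) : ∏ i, w (s i) = ∏ c, w c ^ letterCount s c := by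
  rw [← prod_fiberwise univ s fun i => w (s i)]
  refine prod_congr rfl fun c _ => ?_
  rw [prod_congr rfl fun i hi => congrArg w (mem_filter.1 hi).2, prod_const]
  rfl

lemma mem_orbit_domMulAct_iff {s t : ι → α} :
    t ∈ MulAction.orbit (Equiv.Perm ι)ᵈᵐᵃ s ↔ letterCount t = letterCount s := by
  constructor
  · rintro ⟨g, rfl⟩
    funext c
    exact card_equiv (DomMulAct.mk.symm g) fun i => by simp [DomMulAct.smul_apply]
  · intro h
    have e : ∀ c, {i // t i = c} ≃ {i // s i = c} := fun c =>
      Fintype.equivOfCardEq <| by simpa only [Fintype.card_subtype, letterCount] using congrFun h c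
    exact ⟨DomMulAct.mk (Equiv.ofFiberEquiv e), funext fun i => Equiv.ofFiberEquiv_map e i⟩

variable [Fintype α] [DecidableEq ι]

def typeClass (s : ι → α) : Finset (ι → α) := {t | letterCount t = letterCount s}

lemma coe_typeClass (s : ι → α) :
    (typeClass s : Set (ι → α)) = MulAction.orbit (Equiv.Perm ι)ᵈᵐᵃ s := by
  ext t
  simp [typeClass, mem_orbit_domMulAct_iff]

lemma card_typeClass_mul_prod_factorial (s : ι → α) :
    #(typeClass s) * ∏ c, (letterCount s c)! = (Fintype.card ι)! := by
  have hstab :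
      Nat.card (MulAction.stabilizer (Equiv.Perm ι)ᵈᵐᵃ s) = ∏ c, (letterCount s c)! := by
    rw [Nat.card_congr (Equiv.subtypeEquiv (q := fun g : Equiv.Perm ι => s ∘ g = s)
      DomMulAct.mk.symm fun _ => DomMulAct.mem_stabilizer_iff),
      Nat.card_eq_fintype_card, DomMulAct.stabilizer_card]
    simp only [Fintype.card_subtype]
    rfl
  rw [← hstab, ← Set.ncard_coe_finset, coe_typeClass, ← MulAction.index_stabilizer, mul_comm,
    Subgroup.card_mul_index, Nat.card_congr DomMulAct.mk.symm, Nat.card_perm,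
    Nat.card_eq_fintype_card]

/-- `∏ c, letterCount x c ^ letterCount s c` is `|ι|^|ι|` times the probability of `s` under the
product law with marginal `p̂_x`, so this says that the type class of `x` is the most probable
one. -/
lemma card_typeClass_mul_prod_pow_le (x s : ι → α) :
    #(typeClass s) * ∏ c, letterCount x c ^ letterCount s c ≤
      #(typeClass x) * ∏ c, letterCount x c ^ letterCount x c := by
  set m := letterCount s
  set n := letterCount x
  have hpos : 0 < (∏ c, (m c)!) * ∏ c, (n c)! :=
    Nat.mul_pos (prod_pos fun _ _ => factorial_pos _) (prod_pos fun _ _ => factorial_pos _)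
  refine le_of_mul_le_mul_right ?_ hpos
  calc (#(typeClass s) * ∏ c, n c ^ m c) * ((∏ c, (m c)!) * ∏ c, (n c)!)
      = (#(typeClass s) * ∏ c, (m c)!) * ∏ c, ((n c)! * n c ^ m c) := by
        rw [prod_mul_distrib]; ring
    _ = (Fintype.card ι)! * ∏ c, ((n c)! * n c ^ m c) := by
        rw [card_typeClass_mul_prod_factorial]
    _ ≤ (Fintype.card ι)! * ∏ c, ((m c)! * n c ^ n c) :=
        Nat.mul_le_mul_left _ (prod_le_prod' fun c _ => factorial_mul_pow_le_factorial_mul_pow _ _)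
    _ = (#(typeClass x) * ∏ c, (n c)!) * ∏ c, ((m c)! * n c ^ n c) := by
        rw [card_typeClass_mul_prod_factorial]
    _ = (#(typeClass x) * ∏ c, n c ^ n c) * ((∏ c, (m c)!) * ∏ c, (n c)!) := by
        rw [prod_mul_distrib]; ring

lemma sum_prod_pow_letterCount (x : ι → α) :
    ∑ s : ι → α, ∏ c, letterCount x c ^ letterCount s c =
      Fintype.card ι ^ Fintype.card ι := by
  calc ∑ s : ι → α, ∏ c, letterCount x c ^ letterCount s c
      = ∑ s : ι → α, ∏ i, letterCount x (s i) := by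
        simp only [prod_comp_eq_prod_pow_letterCount]
    _ = ∏ _i : ι, ∑ c, letterCount x c := (Fintype.prod_sum _).symm
    _ = Fintype.card ι ^ Fintype.card ι := by rw [sum_letterCount, prod_const, Finset.card_univ]

lemma card_pow_card_le (x : ι → α) :
    Fintype.card ι ^ Fintype.card ι ≤ (Fintype.card ι + 1) ^ Fintype.card α *
      (#(typeClass x) * ∏ c, letterCount x c ^ letterCount x c) := by
  set W := fun n : α → ℕ => ∏ c, letterCount x c ^ n c
  have hcard_image : #(univ.image (letterCount (ι := ι) (α := α))) ≤
      (Fintype.card ι + 1) ^ Fintype.card α := by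
    calc _ ≤ #(Fintype.piFinset fun _ : α => range (Fintype.card ι + 1)) := by
          refine card_le_card fun n hn => ?_
          obtain ⟨s, -, rfl⟩ := mem_image.1 hn
          simp [letterCount_le]
      _ = _ := by simp
  calc Fintype.card ι ^ Fintype.card ι = ∑ s, W (letterCount s) :=
        (sum_prod_pow_letterCount x).symm
    _ = ∑ n ∈ univ.image letterCount, #{s | letterCount s = n} • W n := sum_comp W letterCount
    _ ≤ ∑ _n ∈ univ.image letterCount, #(typeClass x) * W (letterCount x) := by
        refine sum_le_sum fun n hn => ?_
        obtain ⟨s, -, rfl⟩ := mem_image.1 hn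
        exact card_typeClass_mul_prod_pow_le x s
    _ ≤ _ := by rw [sum_const, smul_eq_mul]; gcongr

end TypeClass

section EmpiricalDistribution

open Real

variable {α : Type*} [DecidableEq α] {k : ℕ}

lemma empDist_eq_letterCount_div (s : Fin k → α) (c : α) :
    empDist s c = letterCount s c / k := by
  rw [empDist, letterCount, card_filter]
  push_cast
  ring

lemma empDist_eq_of_mem_typeClass [Fintype α] {x s : Fin k → α} (hs : s ∈ typeClass x) :
    empDist s = empDist x := by
  simp only [typeClass, mem_filter, mem_univ, true_and] at hs
  funext c
  rw [empDist_eq_letterCount_div, empDist_eq_letterCount_div, hs]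

lemma mul_empDist_mul_logb (s : Fin k → α) (c : α) :
    k * (empDist s c * logb 2 (empDist s c)) =
      letterCount s c * logb 2 (letterCount s c) - letterCount s c * logb 2 k := by
  rw [empDist_eq_letterCount_div]
  rcases (letterCount s c).eq_zero_or_pos with hzero | hpos
  · simp [hzero]
  · have hk : (k : ℝ) ≠ 0 := by
      have := (letterCount_le s c).trans_lt' hpos
      simp only [Fintype.card_fin] at this
      positivity
    rw [logb_div (by positivity) hk]
    field_simp

lemma two_rpow_mul_entropy_empDist [Fintype α] (x : Fin k → α) :
    (2 : ℝ) ^ ((k : ℝ) * (-∑ c, empDist x c * logb 2 (empDist x c))) =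
      ((k ^ k : ℕ) : ℝ) / ((∏ c, letterCount x c ^ letterCount x c : ℕ) : ℝ) := by
  have hW : (0 : ℝ) < ((∏ c, letterCount x c ^ letterCount x c : ℕ) : ℝ) := by
    exact_mod_cast prod_pos fun c _ => Nat.pow_self_pos
  have hexp : (k : ℝ) * (-∑ c, empDist x c * logb 2 (empDist x c)) = logb 2
      (((k ^ k : ℕ) : ℝ) / ((∏ c, letterCount x c ^ letterCount x c : ℕ) : ℝ)) := by
    rw [logb_div (by exact_mod_cast Nat.pow_self_pos.ne') hW.ne']
    push_cast
    rw [logb_pow, logb_prod _ _ fun c _ => by exact_mod_cast Nat.pow_self_pos.ne']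
    simp only [logb_pow, mul_neg, mul_sum, mul_empDist_mul_logb, sum_sub_distrib, ← sum_mul]
    rw [← Nat.cast_sum, sum_letterCount, Fintype.card_fin]
    ring
  rw [hexp, rpow_logb (by norm_num) (by norm_num) (div_pos (by exact_mod_cast Nat.pow_self_pos) hW)]

end EmpiricalDistribution

open scoped Classical in
theorem stmt10_general {𝒳 : Type*} [Fintype 𝒳] [DecidableEq 𝒳] (k : ℕ)
    (x : Fin k → 𝒳) :
    (2 : ℝ) ^ ((k : ℝ) * (-∑ c, empDist x c * Real.logb 2 (empDist x c))) /
        ((k : ℝ) + 1) ^ (Fintype.card 𝒳) ≤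
      ((Finset.univ.filter fun s : Fin k → 𝒳 => empDist s = empDist x).card : ℝ) := by
  have hW : 0 < ∏ c, letterCount x c ^ letterCount x c := prod_pos fun c _ => Nat.pow_self_pos
  have hsub : #(typeClass x) ≤ #{s | empDist s = empDist x} :=
    card_le_card fun s hs => mem_filter.2 ⟨mem_univ s, empDist_eq_of_mem_typeClass hs⟩
  have hcount : k ^ k ≤ #{s : Fin k → 𝒳 | empDist s = empDist x} *
      ((∏ c, letterCount x c ^ letterCount x c) * (k + 1) ^ Fintype.card 𝒳) := by
    calc k ^ k ≤ (k + 1) ^ Fintype.card 𝒳 *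
          (#(typeClass x) * ∏ c, letterCount x c ^ letterCount x c) := by
          simpa only [Fintype.card_fin] using card_pow_card_le x
      _ ≤ _ := by rw [mul_comm, mul_assoc]; gcongr
  rw [two_rpow_mul_entropy_empDist, div_div, div_le_iff₀ (by positivity)]
  exact_mod_cast hcount

open scoped Classical in
/-- Size of a type class: `|T_x| ≥ 2^{k H(p̂_x)} / (k+1)^{|𝒳|}`. -/
theorem stmt10 {𝒳 : Type*} [Fintype 𝒳] [DecidableEq 𝒳] (k : ℕ) (hk : 0 < k)
    (x : Fin k → 𝒳) :
    (2 : ℝ) ^ ((k : ℝ) * (-∑ c, empDist x c * Real.logb 2 (empDist x c))) /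
        ((k : ℝ) + 1) ^ (Fintype.card 𝒳) ≤
      ((Finset.univ.filter fun s : Fin k → 𝒳 => empDist s = empDist x).card : ℝ) :=
  stmt10_general k x
end

section
/- Fix positive integers k ≤ d and let h be the distribution on [d]^k of k draws without replacement from the urn {1,…,d} (uniform over injective k-tuples). For every probability distribution θ on [d], the i.i.d. product measure θ^{⊗k} satisfies ∑_{x injective} θ^{⊗k}(x) ≤ d^{\underline{k}}/d^k, i.e. the probability that k i.i.d. samples from θ are pairwise distinct is maximized by the uniform distribution on [d]. -/
/-!
Grouping the injective `k`-tuples by their image, each `k`-set `S` is hit by `k!` tuples, so the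
sum equals `k! · e_k(θ)`, with `e_k` the `k`-th elementary symmetric polynomial. Maclaurin's
inequality `e_k(θ) ≤ C(d, k) (e_1(θ) / d) ^ k` then bounds it by `k! · C(d, k) / d ^ k`.
Maclaurin's inequality is proved by adding one coordinate at a time: the tangent-line bound for
`t ↦ t ^ (m + 1)` at the old mean absorbs the new coordinate into the new mean.
-/

open Finset Function
open scoped Nat

theorem pow_add_mul_sub_le_pow {x y : ℝ} (hx : 0 ≤ x) (hy : 0 ≤ y) (m : ℕ) :
    y ^ (m + 1) + (m + 1) * y ^ m * (x - y) ≤ x ^ (m + 1) := by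
  rcases hy.eq_or_lt with rfl | hy
  · rcases m with _ | m
    · simp
    · simpa using pow_nonneg hx _
  have bernoulli :=
    one_add_mul_sub_le_pow (by linarith [div_nonneg hx hy.le] : -1 ≤ x / y) (m + 1)
  have key := mul_le_mul_of_nonneg_right bernoulli (pow_nonneg hy.le (m + 1))
  rw [div_pow, div_mul_cancel₀ _ (pow_ne_zero _ hy.ne')] at key
  refine le_of_eq_of_le ?_ key
  rw [pow_succ]
  field_simp
  push_cast
  ring

theorem choose_mul_pow_add_le_choose_succ_mul_pow {n m : ℕ} {u c : ℝ} (hu : 0 ≤ u) (hc : 0 ≤ c) :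
    (n.choose (m + 1) : ℝ) * u ^ (m + 1) + c * ((n.choose m : ℝ) * u ^ m)
      ≤ ((n + 1).choose (m + 1) : ℝ) * ((n * u + c) / (n + 1)) ^ (m + 1) := by
  have pascal : ((n + 1).choose (m + 1) : ℝ) = n.choose m + n.choose (m + 1) := by
    exact_mod_cast Nat.choose_succ_succ n m
  have absorb : ((n : ℝ) + 1) * n.choose m = (n + 1).choose (m + 1) * (m + 1) := by
    exact_mod_cast Nat.add_one_mul_choose_eq n m
  refine le_of_eq_of_le ?_ (mul_le_mul_of_nonneg_left
    (pow_add_mul_sub_le_pow (by positivity) hu m) (Nat.cast_nonneg ((n + 1).choose (m + 1))))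
  have slope : ((n + 1).choose (m + 1) : ℝ) * (m + 1) * ((n * u + c) / (n + 1) - u)
      = n.choose m * (c - u) := by
    rw [← absorb]; field_simp; ring
  linear_combination (-u ^ m) * slope - u ^ (m + 1) * pascal

theorem sum_powersetCard_succ_insert {α β : Type*} [DecidableEq α] [AddCommMonoid β] {a : α}
    {s : Finset α} (ha : a ∉ s) (n : ℕ) (f : Finset α → β) :
    ∑ t ∈ (insert a s).powersetCard (n + 1), f t =
      ∑ t ∈ s.powersetCard (n + 1), f t + ∑ t ∈ s.powersetCard n, f (insert a t) := by
  rw [powersetCard_succ_insert ha, sum_union, sum_image]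
  · exact insert_erase_invOn.2.injOn.mono fun t ht ↦ notMem_mono (mem_powersetCard.1 ht).1 ha
  · aesop (add simp [disjoint_left, insert_subset_iff, mem_powersetCard])

theorem sum_powersetCard_prod_le_choose_mul_pow {ι : Type*} {θ : ι → ℝ}
    (hθ : ∀ i, 0 ≤ θ i) (s : Finset ι) (k : ℕ) :
    ∑ S ∈ s.powersetCard k, ∏ i ∈ S, θ i ≤ ((#s).choose k : ℝ) * ((∑ i ∈ s, θ i) / #s) ^ k := by
  classical
  induction s using Finset.induction_on generalizing k with
  | empty =>
    rcases k with _ | k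
    · simp
    · simp [powersetCard_eq_empty.2 (by simp : #(∅ : Finset ι) < k + 1)]
  | @insert a s ha ih =>
    cases k with
    | zero => simp
    | succ m =>
      set u := (∑ i ∈ s, θ i) / #s
      have hu : 0 ≤ u := div_nonneg (sum_nonneg fun i _ ↦ hθ i) (Nat.cast_nonneg _)
      have sum_eq : ∑ i ∈ s, θ i = #s * u := by
        rcases s.eq_empty_or_nonempty with rfl | hs
        · simp
        · rw [mul_div_cancel₀ _ (by simp [hs.ne_empty])]
      have prod_insert_eq : ∀ t ∈ s.powersetCard m, ∏ i ∈ insert a t, θ i = θ a * ∏ i ∈ t, θ i :=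
        fun t ht ↦ prod_insert (notMem_mono (mem_powersetCard.1 ht).1 ha)
      rw [sum_powersetCard_succ_insert ha, sum_congr rfl prod_insert_eq, ← mul_sum,
        card_insert_of_notMem ha, sum_insert ha, sum_eq, add_comm (θ a)]
      push_cast
      calc _ ≤ ((#s).choose (m + 1) : ℝ) * u ^ (m + 1) + θ a * (((#s).choose m : ℝ) * u ^ m) :=
            add_le_add (ih (m + 1)) (mul_le_mul_of_nonneg_left (ih m) (hθ a))
        _ ≤ _ := choose_mul_pow_add_le_choose_succ_mul_pow hu (hθ a)

theorem card_filter_injective_image_eq {α : Type*} [Fintype α] [DecidableEq α] {k : ℕ}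
    {S : Finset α} (hS : #S = k) :
    #{x : Fin k → α | Injective x ∧ image x univ = S} = k ! := by
  have equiv : {x // x ∈ ({x : Fin k → α | Injective x ∧ image x univ = S} : Finset _)}
      ≃ (Fin k ↪ S) :=
    { toFun x := ⟨fun i ↦ ⟨x.1 i, by
        simpa only [(mem_filter.1 x.2).2.2] using mem_image_of_mem x.1 (mem_univ i)⟩,
        fun i j h ↦ (mem_filter.1 x.2).2.1 (congrArg Subtype.val h)⟩
      invFun e := ⟨Subtype.val ∘ e, by
        have inj : Injective (Subtype.val ∘ e) := Subtype.val_injective.comp e.injective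
        refine mem_filter.2 ⟨mem_univ _, inj, eq_of_subset_of_card_le ?_ ?_⟩
        · intro j hj
          obtain ⟨i, -, rfl⟩ := mem_image.1 hj
          exact (e i).2
        · rw [card_image_of_injective _ inj, card_univ, Fintype.card_fin, hS]⟩
      left_inv _ := rfl
      right_inv _ := rfl }
  rw [card_eq_of_equiv_fintype equiv, Fintype.card_embedding_eq, Fintype.card_coe, hS,
    Fintype.card_fin, Nat.descFactorial_self]

theorem sum_injective_prod_eq_factorial_mul_sum_powersetCard {α R : Type*} [Fintype α]
    [DecidableEq α] [CommSemiring R] (θ : α → R) (k : ℕ) :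
    ∑ x ∈ univ.filter (fun x : Fin k → α ↦ Injective x), ∏ i, θ (x i)
      = k ! * ∑ S ∈ univ.powersetCard k, ∏ i ∈ S, θ i := by
  have image_mem : ∀ x ∈ univ.filter (fun x : Fin k → α ↦ Injective x),
      image x univ ∈ univ.powersetCard k := fun x hx ↦ mem_powersetCard.2
    ⟨subset_univ _, by
      rw [card_image_of_injective _ (mem_filter.1 hx).2, card_univ, Fintype.card_fin]⟩
  rw [← sum_fiberwise_of_maps_to image_mem, mul_sum]
  refine sum_congr rfl fun S hS ↦ ?_
  have fiber_term : ∀ x ∈ {x ∈ univ.filter (fun x : Fin k → α ↦ Injective x) | image x univ = S},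
      ∏ i, θ (x i) = ∏ i ∈ S, θ i := by
    intro x hx
    simp only [mem_filter, mem_univ, true_and] at hx
    obtain ⟨inj, rfl⟩ := hx
    exact (prod_image fun i _ j _ h ↦ inj h).symm
  rw [sum_congr rfl fiber_term, sum_const, filter_filter,
    card_filter_injective_image_eq (mem_powersetCard.1 hS).2, nsmul_eq_mul]

open scoped Classical in
theorem stmt16_general (d k : ℕ) (θ : Fin d → ℝ)
    (hθ0 : ∀ i, 0 ≤ θ i) (hθ1 : ∑ i, θ i = 1) :
    ∑ x ∈ Finset.univ.filter (fun x : Fin k → Fin d => Function.Injective x),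
        ∏ i, θ (x i) ≤ (d.descFactorial k : ℝ) / (d : ℝ) ^ k := by
  have maclaurin := sum_powersetCard_prod_le_choose_mul_pow hθ0 univ k
  rw [card_univ, Fintype.card_fin, hθ1] at maclaurin
  rw [sum_injective_prod_eq_factorial_mul_sum_powersetCard]
  calc _ ≤ (k ! : ℝ) * (d.choose k * (1 / d) ^ k) :=
        mul_le_mul_of_nonneg_left maclaurin (Nat.cast_nonneg _)
    _ = (d.descFactorial k : ℝ) / (d : ℝ) ^ k := by
        rw [Nat.descFactorial_eq_factorial_mul_choose]
        push_cast
        ring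

open scoped Classical in
/-- The probability that `k` i.i.d. samples from a distribution `θ` on `[d]` are
pairwise distinct is at most `d^{\underline{k}}/d^k` (the value for the uniform
distribution): `∑_{x injective} ∏_i θ(x_i) ≤ d^{\underline{k}}/d^k`. -/
theorem stmt16 (d k : ℕ) (hd : 0 < d) (hkd : k ≤ d) (θ : Fin d → ℝ)
    (hθ0 : ∀ i, 0 ≤ θ i) (hθ1 : ∑ i, θ i = 1) :
    ∑ x ∈ Finset.univ.filter (fun x : Fin k → Fin d => Function.Injective x),
        ∏ i, θ (x i) ≤ (d.descFactorial k : ℝ) / (d : ℝ) ^ k :=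
  stmt16_general d k θ hθ0 hθ1
end

section
/- Consider assigning k active users out of n total users into b ≥ k distinct slots (an injective map from the k active users to [b]). Any deterministic encoder that communicates, via a common message T, each active user's own slot to it (with each user decoding only from T and its own identity) satisfies H(T) ≥ k log₂ b − log₂(n^k / n^{\underline{k}}), where the schedule is uniformly random over all C(n,k)·C(b,k)·k! choices of active set and injective assignment. -/
/-!
Shannon entropy is at least min-entropy: `H(T) ≥ log₂ (N / M)` when `N` schedules are equally
likely and at most `M` of them share a message. There are at least `C(n,k) · b^{\underline k}`
schedules. All schedules sent with message `t` are served by the single codeword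
`g = dec · t`, so each is determined by its active set, a `k`-set on which `g` is injective.
There are `∑_{|W| = k} ∏_{w ∈ W} |g⁻¹ w|` such sets, and since the fibre sizes `|g⁻¹ w|`
add up to `n`, Maclaurin's inequality bounds this elementary symmetric sum by `C(b,k) (n/b)^k`.
The ratio of the two counts is `b^k n^{\underline k} / n^k`.
-/

open Finset Real

lemma choose_mul_pow_add_le_choose_succ_mul_pow_s18 {m j : ℕ} {y t : ℝ} (hy : 0 ≤ y)
    (ht : 0 ≤ t) :
    m.choose (j + 1) * y ^ (j + 1) + t * (m.choose j * y ^ j)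
      ≤ (m + 1).choose (j + 1) * ((m * y + t) / (m + 1)) ^ (j + 1) := by
  set z := (m * y + t) / (m + 1 : ℝ) with hz
  have hmz : (m + 1 : ℝ) * z = m * y + t := by rw [hz]; field_simp
  have hz0 : 0 ≤ z := by rw [hz]; positivity
  clear_value z
  have hbernoulli : y ^ (j + 1) + (j + 1) * y ^ j * (z - y) ≤ z ^ (j + 1) := by
    simpa using pow_add_mul_le_add_pow hy (b := z - y) (by linarith) (j + 1)
  have hpascal : ((m + 1).choose (j + 1) : ℝ) = m.choose j + m.choose (j + 1) := by
    exact_mod_cast Nat.choose_succ_succ' m j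
  have habsorb : ((m + 1).choose (j + 1) : ℝ) * (j + 1) = (m + 1) * m.choose j := by
    exact_mod_cast (Nat.add_one_mul_choose_eq m j).symm
  linear_combination ((m + 1).choose (j + 1) : ℝ) * hbernoulli - y ^ (j + 1) * hpascal
    - y ^ j * (z - y) * habsorb - (m.choose j : ℝ) * y ^ j * hmz

lemma Multiset.esymm_cons_succ {R : Type*} [CommSemiring R] (a : R) (s : Multiset R) (j : ℕ) :
    (a ::ₘ s).esymm (j + 1) = s.esymm (j + 1) + a * s.esymm j := by
  simp [Multiset.esymm, Multiset.powersetCard_cons, Multiset.sum_map_mul_left]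

theorem Multiset.esymm_le_choose_mul_pow_mean {s : Multiset ℝ} (hs : ∀ a ∈ s, 0 ≤ a)
    (k : ℕ) :
    s.esymm k ≤ (card s).choose k * (s.sum / card s) ^ k := by
  induction s using Multiset.induction_on generalizing k with
  | empty => cases k <;> simp [Multiset.esymm, Multiset.powersetCard_zero_right]
  | cons a s ih =>
    have ha : 0 ≤ a := hs a (mem_cons_self a s)
    have hs' : ∀ b ∈ s, 0 ≤ b := fun b hb => hs b (mem_cons_of_mem hb)
    have hmean : (card s : ℝ) * (s.sum / card s) = s.sum := by
      rcases eq_or_ne (card s) 0 with h | h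
      · simp [card_eq_zero.1 h]
      · field_simp
    cases k with
    | zero => simp [Multiset.esymm]
    | succ j =>
      have step := choose_mul_pow_add_le_choose_succ_mul_pow_s18 (m := card s) (j := j)
        (y := s.sum / card s) (div_nonneg (sum_nonneg hs') (Nat.cast_nonneg _)) ha
      rw [hmean] at step
      rw [esymm_cons_succ, card_cons, sum_cons, add_comm a]
      push_cast
      exact (add_le_add (ih hs' _) (mul_le_mul_of_nonneg_left (ih hs' j) ha)).trans step

namespace Scheduling

variable {α β : Type*} [DecidableEq α]

def scheduleOfEmbedding (S : Finset α) (e : S ↪ β) (u : α) : Option β :=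
  if h : u ∈ S then some (e ⟨u, h⟩) else none

lemma scheduleOfEmbedding_injective (S : Finset α) :
    Function.Injective (scheduleOfEmbedding (β := β) S) := by
  intro e e' h
  ext ⟨u, hu⟩
  simpa [scheduleOfEmbedding, hu] using congrFun h u

variable [Fintype α]

def activeSet (x : α → Option β) : Finset α := {u | (x u).isSome}

def IsSchedule (k : ℕ) (x : α → Option β) : Prop :=
  #(activeSet x) = k ∧ ∀ u v w, x u = some w → x v = some w → u = v

instance [Fintype β] [DecidableEq β] (k : ℕ) :
    DecidablePred (IsSchedule (α := α) (β := β) k) :=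
  fun _ => inferInstanceAs (Decidable (_ ∧ _))

def schedules (α β : Type*) [Fintype α] [DecidableEq α] [Fintype β] [DecidableEq β]
    (k : ℕ) : Finset (α → Option β) :=
  {x | IsSchedule k x}

lemma activeSet_scheduleOfEmbedding (S : Finset α) (e : S ↪ β) :
    activeSet (scheduleOfEmbedding S e) = S := by
  ext u
  by_cases h : u ∈ S <;> simp [activeSet, scheduleOfEmbedding, h]

lemma isSchedule_scheduleOfEmbedding {k : ℕ} {S : Finset α} (hS : #S = k) (e : S ↪ β) :
    IsSchedule k (scheduleOfEmbedding S e) := by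
  refine ⟨by rw [activeSet_scheduleOfEmbedding, hS], fun u v w hu hv => ?_⟩
  unfold scheduleOfEmbedding at hu hv
  split_ifs at hu hv
  exact congrArg Subtype.val (e.injective (Option.some_injective _ (hu.trans hv.symm)))

theorem choose_mul_descFactorial_le_card_schedules [Fintype β] [DecidableEq β] (k : ℕ) :
    (Fintype.card α).choose k * (Fintype.card β).descFactorial k ≤ #(schedules α β k) := by
  have hmaps : Set.MapsTo activeSet (schedules α β k : Set (α → Option β))
      (powersetCard k univ : Finset (Finset α)) := by
    intro x hx
    simpa [schedules] using (mem_filter.1 hx).2.1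
  rw [card_eq_sum_card_fiberwise hmaps, ← card_univ, ← card_powersetCard, ← smul_eq_mul]
  refine card_nsmul_le_sum _ _ _ fun S hS => ?_
  have hS : #S = k := (mem_powersetCard.1 hS).2
  calc (Fintype.card β).descFactorial k = Fintype.card (S ↪ β) := by
        rw [Fintype.card_embedding_eq, Fintype.card_coe, hS]
    _ ≤ _ := by
      rw [← card_univ]
      refine card_le_card_of_injOn (scheduleOfEmbedding S) (fun e _ => ?_)
        (scheduleOfEmbedding_injective S).injOn
      simp [schedules, isSchedule_scheduleOfEmbedding hS, activeSet_scheduleOfEmbedding]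

lemma eq_ite_activeSet_of_forall_eq_some {g : α → β} {x : α → Option β}
    (hx : ∀ u w, x u = some w → g u = w) :
    x = fun u => if u ∈ activeSet x then some (g u) else none := by
  funext u
  cases hu : x u with
  | none => simp [activeSet, hu]
  | some w => simp [activeSet, hu, hx u w hu]

variable [Fintype β] [DecidableEq β]

def coveredSchedules (g : α → β) (k : ℕ) : Finset (α → Option β) :=
  {x ∈ schedules α β k | ∀ u w, x u = some w → g u = w}

lemma mem_coveredSchedules {g : α → β} {k : ℕ} {x : α → Option β} :
    x ∈ coveredSchedules g k ↔ x ∈ schedules α β k ∧ ∀ u w, x u = some w → g u = w :=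
  mem_filter

open scoped Classical in
lemma card_coveredSchedules_le_card_injOn (g : α → β) (k : ℕ) :
    #(coveredSchedules g k) ≤
      #((powersetCard k univ).filter fun S : Finset α => Set.InjOn g S) := by
  refine card_le_card_of_injOn activeSet (fun x hx => ?_) (fun x hx y hy hxy => ?_)
  · simp only [coveredSchedules, coe_filter, schedules, mem_filter, mem_univ, true_and,
      Set.mem_ofPred_eq] at hx
    obtain ⟨⟨hcard, hinj⟩, hg⟩ := hx
    refine mem_filter.2 ⟨mem_powersetCard.2 ⟨subset_univ _, hcard⟩, fun u hu v hv huv => ?_⟩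
    rw [eq_ite_activeSet_of_forall_eq_some hg] at hinj
    exact hinj u v (g v) (by simp_all) (by simp_all)
  · simp only [coveredSchedules, coe_filter, Set.mem_ofPred_eq] at hx hy
    rw [eq_ite_activeSet_of_forall_eq_some hx.2, eq_ite_activeSet_of_forall_eq_some hy.2, hxy]

open scoped Classical in
lemma card_injOn_powersetCard_le_sum_prod (g : α → β) (k : ℕ) :
    #((powersetCard k univ).filter fun S : Finset α => Set.InjOn g S) ≤
      ∑ W ∈ powersetCard k univ, ∏ w ∈ W, #{u | g u = w} := by
  have hmaps : Set.MapsTo (image g)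
      ((powersetCard k univ).filter fun S : Finset α => Set.InjOn g S)
      (powersetCard k univ : Finset (Finset β)) := by
    intro S hS
    simp only [coe_filter, mem_powersetCard, subset_univ, true_and, Set.mem_ofPred_eq] at hS
    simpa [card_image_of_injOn hS.2] using hS.1
  rw [card_eq_sum_card_fiberwise hmaps]
  refine sum_le_sum fun W _ => ?_
  -- A `k`-set with image `W` on which `g` is injective is the image of a section of `g` over `W`.
  rw [← card_pi]
  refine card_le_card_of_surjOn (fun σ => W.attach.image fun w => σ w.1 w.2) fun S hS => ?_
  simp only [coe_filter, mem_filter, mem_powersetCard, subset_univ, true_and,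
    Set.mem_ofPred_eq] at hS
  obtain ⟨⟨-, hinj⟩, rfl⟩ := hS
  have hsection : ∀ w ∈ S.image g, ∃ u ∈ S, g u = w := fun w hw => mem_image.1 hw
  choose σ hσS hσg using hsection
  refine ⟨σ, by simpa [mem_pi] using hσg, ?_⟩
  ext u
  simp only [mem_image, mem_attach, true_and, Subtype.exists]
  constructor
  · rintro ⟨w, hw, rfl⟩
    exact hσS w (mem_image.2 hw)
  · intro hu
    exact ⟨g u, ⟨u, hu, rfl⟩, hinj (hσS _ _) hu (hσg _ _)⟩

theorem card_coveredSchedules_le (g : α → β) (k : ℕ) :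
    (#(coveredSchedules g k) : ℝ) ≤
      (Fintype.card β).choose k * (Fintype.card α / Fintype.card β : ℝ) ^ k := by
  classical
  set v : β → ℝ := fun w => #{u | g u = w}
  have hsum : ∑ w, v w = Fintype.card α := by
    simp only [v]
    rw [← card_univ]
    exact_mod_cast (card_eq_sum_card_fiberwise (f := g) fun _ _ => mem_univ _).symm
  calc _ ≤ ((∑ W ∈ powersetCard k univ, ∏ w ∈ W, #{u | g u = w} : ℕ) : ℝ) := by
        exact_mod_cast (card_coveredSchedules_le_card_injOn g k).trans
          (card_injOn_powersetCard_le_sum_prod g k)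
    _ = (univ.val.map v).esymm k := by
        rw [Finset.esymm_map_val]
        push_cast
        rfl
    _ ≤ _ := by
        convert Multiset.esymm_le_choose_mul_pow_mean (s := univ.val.map v) (by simp [v]) k
          using 3 <;> simp [hsum]

end Scheduling

lemma neg_logb_le_neg_sum_mul_logb {ι : Type*} (s : Finset ι) {p : ι → ℝ} {c q : ℝ}
    (hc : 1 < c) (hp : ∀ i ∈ s, 0 ≤ p i) (hsum : ∑ i ∈ s, p i = 1)
    (hq : ∀ i ∈ s, p i ≤ q) :
    -logb c q ≤ -∑ i ∈ s, p i * logb c (p i) := by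
  rw [neg_le_neg_iff]
  calc ∑ i ∈ s, p i * logb c (p i) ≤ ∑ i ∈ s, p i * logb c q := by
        refine sum_le_sum fun i hi => ?_
        rcases (hp i hi).eq_or_lt with h | h
        · simp [← h]
        · exact mul_le_mul_of_nonneg_left (logb_le_logb_of_le hc h (hq i hi)) h.le
    _ = logb c q := by rw [← sum_mul, hsum, one_mul]

lemma logb_card_div_le_neg_tsum_mul_logb {γ δ : Type*} [DecidableEq δ] (s : Finset γ)
    (f : γ → δ) {c M : ℝ} (hc : 1 < c) (hs : s.Nonempty)
    (hM : ∀ t, (#{x ∈ s | f x = t} : ℝ) ≤ M) :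
    logb c (#s / M) ≤
      -∑' t, (#{x ∈ s | f x = t} / #s : ℝ) * logb c (#{x ∈ s | f x = t} / #s : ℝ) := by
  have hN : (0 : ℝ) < #s := by exact_mod_cast hs.card_pos
  have hfibers : ∀ t ∉ s.image f, {x ∈ s | f x = t} = ∅ := fun t ht =>
    filter_eq_empty_iff.2 fun x hx hxt => ht (hxt ▸ mem_image_of_mem f hx)
  rw [tsum_eq_sum (s := s.image f) fun t ht => by simp [hfibers t ht], ← inv_div, logb_inv]
  refine neg_logb_le_neg_sum_mul_logb _ hc (fun _ _ => by positivity) ?_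
    fun t _ => div_le_div_of_nonneg_right (hM t) hN.le
  rw [← sum_div, ← Nat.cast_sum, ← card_eq_sum_card_fiberwise fun x hx => mem_image_of_mem f hx,
    div_self hN.ne']

lemma mul_logb_sub_logb_descFactorial_eq {n b k : ℕ} (c : ℝ) (hkn : k ≤ n) (hkb : k ≤ b) :
    k * logb c b - logb c ((n : ℝ) ^ k / n.descFactorial k) =
      logb c (n.choose k * b.descFactorial k / (b.choose k * ((n : ℝ) / b) ^ k)) := by
  rcases k.eq_zero_or_pos with rfl | hk
  · simp
  have hn : (n : ℝ) ≠ 0 := by norm_cast; omega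
  have hb : (b : ℝ) ≠ 0 := by norm_cast; omega
  have hchoose : (b.choose k : ℝ) ≠ 0 := by exact_mod_cast (Nat.choose_pos hkb).ne'
  have hdesc : (n.descFactorial k : ℝ) ≠ 0 := by
    exact_mod_cast (Nat.descFactorial_pos.2 hkn).ne'
  rw [← logb_pow, ← logb_div (by positivity) (by positivity)]
  congr 1
  rw [Nat.descFactorial_eq_factorial_mul_choose n k,
    Nat.descFactorial_eq_factorial_mul_choose b k]
  push_cast [div_pow]
  field_simp

open scoped Classical in
theorem stmt18_general (n b k : ℕ) (hkn : k ≤ n) (hkb : k ≤ b)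
    (Inst : Finset (Fin n → Option (Fin b)))
    (hInst : Inst = Finset.univ.filter fun x =>
      (Finset.univ.filter fun u => (x u).isSome).card = k ∧
      ∀ u v : Fin n, ∀ w : Fin b, x u = some w → x v = some w → u = v)
    (f : (Fin n → Option (Fin b)) → ℕ)
    (dec : Fin n → ℕ → Fin b)
    (hcorrect : ∀ x ∈ Inst, ∀ u : Fin n, ∀ w : Fin b, x u = some w → dec u (f x) = w) :
    (k : ℝ) * Real.logb 2 b - Real.logb 2 ((n : ℝ) ^ k / (n.descFactorial k : ℝ)) ≤
      -∑' t : ℕ, ((Inst.filter fun x => f x = t).card / Inst.card : ℝ) *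
        Real.logb 2 ((Inst.filter fun x => f x = t).card / Inst.card : ℝ) := by
  have hInst' : Inst = Scheduling.schedules (Fin n) (Fin b) k := by
    ext x
    simp only [hInst, Scheduling.schedules, mem_filter, mem_univ, true_and]
    rfl
  set M : ℝ := b.choose k * ((n : ℝ) / b) ^ k
  have hfiber (t : ℕ) : (#{x ∈ Inst | f x = t} : ℝ) ≤ M := by
    have hcovered := Scheduling.card_coveredSchedules_le (fun u => dec u t) k
    rw [Fintype.card_fin, Fintype.card_fin] at hcovered
    refine le_trans (Nat.cast_le.2 (card_le_card fun x hx => ?_)) hcovered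
    obtain ⟨hxInst, rfl⟩ := mem_filter.1 hx
    exact Scheduling.mem_coveredSchedules.2 ⟨hInst' ▸ hxInst, hcorrect x hxInst⟩
  have hcard : n.choose k * b.descFactorial k ≤ #Inst := by
    simpa [hInst'] using
      Scheduling.choose_mul_descFactorial_le_card_schedules (α := Fin n) (β := Fin b) k
  have hpos : 0 < n.choose k * b.descFactorial k :=
    Nat.mul_pos (Nat.choose_pos hkn) (Nat.descFactorial_pos.2 hkb)
  have hM : 0 < M := by
    rcases k.eq_zero_or_pos with rfl | hk
    · simp [M]
    · have : 0 < n := by omega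
      have : 0 < b := by omega
      exact mul_pos (by exact_mod_cast Nat.choose_pos hkb) (by positivity)
  rw [mul_logb_sub_logb_descFactorial_eq 2 hkn hkb]
  calc _ ≤ logb 2 (#Inst / M) :=
        logb_le_logb_of_le one_lt_two (div_pos (by exact_mod_cast hpos) hM)
          (div_le_div_of_nonneg_right (by exact_mod_cast hcard) hM.le)
    _ ≤ _ := logb_card_div_le_neg_tsum_mul_logb Inst f one_lt_two
          (card_pos.1 (hpos.trans_le hcard)) hfiber

open scoped Classical in
/-- Converse for scheduling: `k` active users out of `n` are assigned injectively into
`b ≥ k` slots. A scheduling instance is a partial map `x : [n] → Option [b]` with exactly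
`k` active users (those mapped to `some` slot) and distinct slots for distinct active
users. A deterministic encoder `f` produces a common message `T = f(x)`, and each user
`u` decodes its own slot from `T` alone via `dec u`; correctness requires
`dec u (f x) = slot of u` whenever `u` is active in `x`. If the instance is uniformly
distributed over all `C(n,k)·C(b,k)·k!` instances, then
`H(T) ≥ k log₂ b − log₂(n^k / n^{\underline{k}})`. -/
theorem stmt18 (n b k : ℕ) (hk : 0 < k) (hkn : k ≤ n) (hkb : k ≤ b)
    (Inst : Finset (Fin n → Option (Fin b)))
    (hInst : Inst = Finset.univ.filter fun x =>
      (Finset.univ.filter fun u => (x u).isSome).card = k ∧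
      ∀ u v : Fin n, ∀ w : Fin b, x u = some w → x v = some w → u = v)
    (f : (Fin n → Option (Fin b)) → ℕ)
    (dec : Fin n → ℕ → Fin b)
    (hcorrect : ∀ x ∈ Inst, ∀ u : Fin n, ∀ w : Fin b, x u = some w → dec u (f x) = w) :
    (k : ℝ) * Real.logb 2 b - Real.logb 2 ((n : ℝ) ^ k / (n.descFactorial k : ℝ)) ≤
      -∑' t : ℕ, ((Inst.filter fun x => f x = t).card / Inst.card : ℝ) *
        Real.logb 2 ((Inst.filter fun x => f x = t).card / Inst.card : ℝ) :=
  stmt18_general n b k hkn hkb Inst hInst f dec hcorrect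
end
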